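/- arXiv:1604.04340 — 10 statements merged into one kernel-verified Lean document; each statement's English description precedes it below -/
import Mathlib

section
/- Let (S, P) be a probability space, let n ≥ 2 be an integer, let W_1, …, W_n be events, and let W = W_1 ∩ … ∩ W_n with P(W) > 0. Let 0 < ε ≤ 1 and suppose log₂(1/P(W)) ≤ εn/16 − log₂(4/ε). Then there exists a subset C ⊆ {1,…,n} with |C| ≤ (8/ε)·(log₂(4/ε) + log₂(1/P(W))) and |C| < n such that (1/(n − |C|)) · Σ_{i ∉ C} P(W_i | W_C) ≥ 1 − ε/2, where W_C = ∩_{i ∈ C} W_i (with W_∅ the whole space, so that P(W_C) > 0). -/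
/-!
Take `C` of maximal size with `P(W_C) ≤ (1 - ε/2)^|C|`. Maximality means that adding any further
coordinate `i` breaks this inequality, i.e. `P(W_i | W_C) ≥ 1 - ε/2` for every `i ∉ C`, which
gives the average bound. Since `P(W) ≤ P(W_C) ≤ (1 - ε/2)^|C|`, taking logarithms bounds `|C|` by
`(2/ε) log₂(1/P(W))`, which is smaller than both required bounds.
-/

open MeasureTheory Finset Real

theorem Real.logb_two_le_sub_one {y : ℝ} (hy0 : 0 < y) (hy1 : y ≤ 1) : logb 2 y ≤ y - 1 := by
  have hlog_y : log y ≤ 0 := log_nonpos hy0.le hy1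
  have hlog_two : 0 < log 2 := log_pos one_lt_two
  have hlog_two_le : log 2 ≤ 1 := by linarith [log_two_lt_d9]
  calc logb 2 y = log y / log 2 := rfl
    _ ≤ log y := by rw [div_le_iff₀ hlog_two]; nlinarith
    _ ≤ y - 1 := log_le_sub_one_of_pos hy0

theorem Real.mul_le_logb_two_one_div_of_le_pow {q x : ℝ} {k : ℕ} (hq : 0 < q) (hx0 : 0 ≤ x)
    (hx1 : x < 1) (h : q ≤ (1 - x) ^ k) : k * x ≤ logb 2 (1 / q) := by
  have hlog_q : logb 2 q ≤ k * logb 2 (1 - x) := by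
    rw [← logb_pow]; exact logb_le_logb_of_le one_lt_two hq h
  have hlog_one_sub : logb 2 (1 - x) ≤ -x := by
    linarith [logb_two_le_sub_one (by linarith : 0 < 1 - x) (by linarith : 1 - x ≤ 1)]
  rw [one_div, logb_inv]
  nlinarith [(Nat.cast_nonneg k : (0 : ℝ) ≤ k)]

theorem MeasureTheory.exists_measureReal_biInter_le_pow_and_mul_le_measureReal_inter
    {Ω ι : Type*} [MeasurableSpace Ω] [Fintype ι] [DecidableEq ι]
    (P : Measure Ω) [IsZeroOrProbabilityMeasure P] (W : ι → Set Ω) {θ : ℝ} (hθ : 0 ≤ θ) :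
    ∃ C : Finset ι, P.real (⋂ j ∈ C, W j) ≤ θ ^ #C ∧
      ∀ i ∉ C, θ * P.real (⋂ j ∈ C, W j) ≤ P.real (W i ∩ ⋂ j ∈ C, W j) := by
  set T : Finset (Finset ι) := {C | P.real (⋂ j ∈ C, W j) ≤ θ ^ #C}
  have hT : (∅ : Finset ι) ∈ T := by simp [T, measureReal_le_one]
  obtain ⟨C, hCT, hCmax⟩ := T.exists_max_image card ⟨∅, hT⟩
  have hC : P.real (⋂ j ∈ C, W j) ≤ θ ^ #C := (mem_filter.1 hCT).2
  refine ⟨C, hC, fun i hi => ?_⟩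
  by_contra! hlt
  have hinsert : insert i C ∈ T := by
    simp only [T, mem_filter, mem_univ, true_and, set_biInter_insert, card_insert_of_notMem hi,
      pow_succ']
    exact hlt.le.trans (mul_le_mul_of_nonneg_left hC hθ)
  have hcard_le := hCmax _ hinsert
  rw [card_insert_of_notMem hi] at hcard_le
  omega

theorem stmt0_general {S : Type*} [MeasurableSpace S] (P : Measure S) [IsProbabilityMeasure P]
    (n : ℕ) (W : Fin n → Set S)
    (hWpos : 0 < P (⋂ i, W i))
    (ε : ℝ) (hε0 : 0 < ε) (hε1 : ε ≤ 1)
    (hlog : Real.logb 2 (1 / (P (⋂ i, W i)).toReal)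
      ≤ ε * n / 16 - Real.logb 2 (4 / ε)) :
    ∃ C : Finset (Fin n),
      (C.card : ℝ) ≤ (8 / ε) *
        (Real.logb 2 (4 / ε) + Real.logb 2 (1 / (P (⋂ i, W i)).toReal)) ∧
      C.card < n ∧
      (1 / ((n : ℝ) - C.card)) *
        ∑ i ∈ Finset.univ \ C,
          (P (W i ∩ ⋂ j ∈ C, W j)).toReal / (P (⋂ j ∈ C, W j)).toReal
        ≥ 1 - ε / 2 := by
  simp only [← measureReal_def] at hlog ⊢
  obtain ⟨C, hC_le_pow, hC_cond⟩ :=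
    exists_measureReal_biInter_le_pow_and_mul_le_measureReal_inter P W (θ := 1 - ε / 2)
      (by linarith)
  have hW_le_WC : P.real (⋂ i, W i) ≤ P.real (⋂ j ∈ C, W j) :=
    measureReal_mono (Set.subset_iInter₂ fun j _ => Set.iInter_subset W j)
  have hW_real_pos : 0 < P.real (⋂ i, W i) := ENNReal.toReal_pos hWpos.ne' (measure_ne_top P _)
  have hcard_mul : (#C : ℝ) * (ε / 2) ≤ logb 2 (1 / P.real (⋂ i, W i)) :=
    mul_le_logb_two_one_div_of_le_pow hW_real_pos (by linarith) (by linarith)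
      (hW_le_WC.trans hC_le_pow)
  have hlog_four : 0 < logb 2 (4 / ε) := logb_pos one_lt_two (by rw [lt_div_iff₀ hε0]; linarith)
  have hcard_lt : #C < n := by
    have : (#C : ℝ) < n := by nlinarith
    exact_mod_cast this
  refine ⟨C, ?_, hcard_lt, ?_⟩
  · rw [div_mul_eq_mul_div, le_div_iff₀ hε0]
    nlinarith
  · have hWC_pos : 0 < P.real (⋂ j ∈ C, W j) := hW_real_pos.trans_le hW_le_WC
    have hcompl : ((n : ℝ) - #C) = #(univ \ C) := by
      rw [card_univ_sdiff, Fintype.card_fin, Nat.cast_sub hcard_lt.le]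
    rw [hcompl, one_div, ← div_eq_inv_mul, ← expect_eq_sum_div_card, ge_iff_le]
    have hrest : (univ \ C).Nonempty :=
      card_pos.1 (by rw [card_univ_sdiff, Fintype.card_fin]; omega)
    exact le_expect hrest fun i hi =>
      (le_div_iff₀ hWC_pos).2 <| hC_cond i (mem_sdiff.1 hi).2

/-- Proposition 1 of the paper: if `log₂(1/P(W)) ≤ εn/16 − log₂(4/ε)`, there is a
not-too-large set `C` of coordinates such that the average conditional winning
probability of the remaining coordinates, given winning all coordinates in `C`,
is at least `1 − ε/2`. -/
theorem stmt0 {S : Type*} [MeasurableSpace S] (P : Measure S) [IsProbabilityMeasure P]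
    (n : ℕ) (hn : 2 ≤ n) (W : Fin n → Set S) (hWmeas : ∀ i, MeasurableSet (W i))
    (hWpos : 0 < P (⋂ i, W i))
    (ε : ℝ) (hε0 : 0 < ε) (hε1 : ε ≤ 1)
    (hlog : Real.logb 2 (1 / (P (⋂ i, W i)).toReal)
      ≤ ε * n / 16 - Real.logb 2 (4 / ε)) :
    ∃ C : Finset (Fin n),
      (C.card : ℝ) ≤ (8 / ε) *
        (Real.logb 2 (4 / ε) + Real.logb 2 (1 / (P (⋂ i, W i)).toReal)) ∧
      C.card < n ∧
      (1 / ((n : ℝ) - C.card)) *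
        ∑ i ∈ Finset.univ \ C,
          (P (W i ∩ ⋂ j ∈ C, W j)).toReal / (P (⋂ j ∈ C, W j)).toReal
        ≥ 1 - ε / 2 :=
  stmt0_general P n W hWpos ε hε0 hε1 hlog
end

section
/- Let (S, P) be a probability space, n ≥ 1 an integer, W_1, …, W_n events, 0 ≤ δ ≤ 1, and t ≥ 1 an integer. Let E be an event such that every outcome in E belongs to at most (1 − δ)n of the events W_1, …, W_n. Let I_1, …, I_t be i.i.d. indices, each uniformly distributed on {1,…,n} (independent of everything else). Then E_{I_1,…,I_t}[ P(W_{I_1} ∩ … ∩ W_{I_t} ∩ E) ] ≤ (1 − δ)^t · P(E). -/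
open MeasureTheory

/-- If every outcome of the event `E` lies in at most `(1−δ)n` of the events `W₁,…,Wₙ`,
then for `t` i.i.d. uniformly random indices `I₁,…,I_t`, the expectation of
`P(W_{I₁} ∩ ⋯ ∩ W_{I_t} ∩ E)` is at most `(1−δ)^t · P(E)`. -/
theorem stmt1 {S : Type*} [MeasurableSpace S] (P : Measure S) [IsProbabilityMeasure P]
    (n : ℕ) (hn : 1 ≤ n) (W : Fin n → Set S) (hWmeas : ∀ i, MeasurableSet (W i))
    (δ : ℝ) (hδ0 : 0 ≤ δ) (hδ1 : δ ≤ 1)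
    (t : ℕ) (ht : 1 ≤ t)
    (E : Set S) (hEmeas : MeasurableSet E)
    (hE : ∀ ω ∈ E, (Nat.card {i : Fin n // ω ∈ W i} : ℝ) ≤ (1 - δ) * n) :
    (1 / (n : ℝ) ^ t) *
      ∑ I : Fin t → Fin n, (P ((⋂ k, W (I k)) ∩ E)).toReal
      ≤ (1 - δ) ^ t * (P E).toReal := by
  classical
  set g : Fin n → S → ENNReal := fun i ω => (W i).indicator 1 ω with hg
  -- each single probability as an integral over E
  have hA : ∀ I : Fin t → Fin n, MeasurableSet (⋂ k, W (I k)) :=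
    fun I => MeasurableSet.iInter fun k => hWmeas (I k)
  have hone : ∀ I : Fin t → Fin n,
      P ((⋂ k, W (I k)) ∩ E) = ∫⁻ ω in E, ∏ k, g (I k) ω ∂P := by
    intro I
    have hprod : ∀ ω, ∏ k, g (I k) ω = (⋂ k, W (I k)).indicator 1 ω := by
      intro ω
      by_cases h : ω ∈ ⋂ k, W (I k)
      · rw [Set.indicator_of_mem h]
        have h' : ∀ k, ω ∈ W (I k) := by simpa [Set.mem_iInter] using h
        simp [hg, Set.indicator_of_mem, h']
      · rw [Set.indicator_of_notMem h]
        simp only [Set.mem_iInter, not_forall] at h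
        obtain ⟨k, hk⟩ := h
        exact Finset.prod_eq_zero (Finset.mem_univ k)
          (by simp [hg, Set.indicator_of_notMem hk])
    calc P ((⋂ k, W (I k)) ∩ E) = (P.restrict E) (⋂ k, W (I k)) := by
          rw [Measure.restrict_apply (hA I)]
      _ = ∫⁻ ω in E, (⋂ k, W (I k)).indicator 1 ω ∂P := by
          rw [lintegral_indicator (hA I)]
          simp
      _ = ∫⁻ ω in E, ∏ k, g (I k) ω ∂P := by simp_rw [hprod]
  -- sum over all tuples
  have hmeas : ∀ I : Fin t → Fin n, Measurable fun ω => ∏ k, g (I k) ω :=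
    fun I => Finset.measurable_prod _ fun k _ =>
      (measurable_one.indicator (hWmeas (I k)))
  have hsum : ∑ I : Fin t → Fin n, P ((⋂ k, W (I k)) ∩ E)
      = ∫⁻ ω in E, (∑ i, g i ω) ^ t ∂P := by
    simp_rw [hone]
    rw [← lintegral_finset_sum _ fun I _ => (hmeas I)]
    congr 1
    ext ω
    rw [← Fin.prod_const t (∑ i, g i ω), Finset.prod_univ_sum]
    simp
  -- pointwise bound on E
  have hbound : ∀ ω ∈ E, (∑ i, g i ω) ≤ ENNReal.ofReal ((1 - δ) * n) := by
    intro ω hω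
    have hcount : (∑ i, g i ω) = (Nat.card {i : Fin n // ω ∈ W i} : ENNReal) := by
      rw [Nat.card_eq_fintype_card, Fintype.card_subtype]
      simp [hg, Set.indicator_apply, Finset.sum_boole]
    rw [hcount]
    have := hE ω hω
    calc ((Nat.card {i : Fin n // ω ∈ W i} : ENNReal))
        = ENNReal.ofReal ((Nat.card {i : Fin n // ω ∈ W i} : ℝ)) := by
          rw [ENNReal.ofReal_natCast]
      _ ≤ ENNReal.ofReal ((1 - δ) * n) := ENNReal.ofReal_le_ofReal this
  -- integral bound
  have hint : ∫⁻ ω in E, (∑ i, g i ω) ^ t ∂P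
      ≤ ENNReal.ofReal ((1 - δ) * n) ^ t * P E := by
    calc ∫⁻ ω in E, (∑ i, g i ω) ^ t ∂P
        ≤ ∫⁻ _ in E, ENNReal.ofReal ((1 - δ) * n) ^ t ∂P := by
          refine setLIntegral_mono_ae ?_ ?_
          · exact aemeasurable_const
          · filter_upwards with ω hω
            exact pow_le_pow_left' (hbound ω hω) t
      _ = ENNReal.ofReal ((1 - δ) * n) ^ t * P E := by
          rw [setLIntegral_const]
  -- convert to reals
  have hfin : ∀ I : Fin t → Fin n, P ((⋂ k, W (I k)) ∩ E) ≠ ⊤ :=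
    fun I => (measure_lt_top P _).ne
  have hreal : ∑ I : Fin t → Fin n, (P ((⋂ k, W (I k)) ∩ E)).toReal
      ≤ ((1 - δ) * n) ^ t * (P E).toReal := by
    rw [← ENNReal.toReal_sum fun I _ => hfin I]
    have h2 : (ENNReal.ofReal ((1 - δ) * n) ^ t * P E).toReal
        = ((1 - δ) * n) ^ t * (P E).toReal := by
      rw [ENNReal.toReal_mul, ENNReal.toReal_pow, ENNReal.toReal_ofReal
        (mul_nonneg (by linarith) (Nat.cast_nonneg n))]
    calc (∑ I : Fin t → Fin n, P ((⋂ k, W (I k)) ∩ E)).toReal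
        ≤ (ENNReal.ofReal ((1 - δ) * n) ^ t * P E).toReal := by
          apply ENNReal.toReal_mono
          · exact ENNReal.mul_ne_top (ENNReal.pow_ne_top ENNReal.ofReal_ne_top) (measure_ne_top P E)
          · rw [hsum]; exact hint
      _ = ((1 - δ) * n) ^ t * (P E).toReal := h2
  have hn' : (0:ℝ) < (n:ℝ) ^ t := by positivity
  rw [div_mul_eq_mul_div, one_mul, div_le_iff₀ hn']
  calc ∑ I : Fin t → Fin n, (P ((⋂ k, W (I k)) ∩ E)).toReal
      ≤ ((1 - δ) * n) ^ t * (P E).toReal := hreal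
    _ = (1 - δ) ^ t * (P E).toReal * (n:ℝ) ^ t := by rw [mul_pow]; ring
end

section
/- Let (S, P) be a probability space, n ≥ 1 an integer, W_1, …, W_n events, W = W_1 ∩ … ∩ W_n with P(W) > 0, 0 ≤ δ ≤ 1, and t ≥ 1 an integer. Let W_{>1−δ} denote the event that strictly more than (1 − δ)n of the events W_1, …, W_n occur. Let I_1, …, I_t be i.i.d. indices, each uniform on {1,…,n}. Then E_{I_1,…,I_t}[ P(¬W_{>1−δ} | W_{I_1} ∩ … ∩ W_{I_t}) ] ≤ (1 − δ)^t / P(W). (Note each conditioning event contains W, so has positive probability.) -/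
open MeasureTheory

/-- Let `W_{>1−δ}` be the event that strictly more than `(1−δ)n` of the events `W_i` occur.
For `t` i.i.d. uniform indices, the expected conditional probability of the complement of
`W_{>1−δ}` given `W_{I₁} ∩ ⋯ ∩ W_{I_t}` is at most `(1−δ)^t / P(W)`. -/
theorem stmt2 {S : Type*} [MeasurableSpace S] (P : Measure S) [IsProbabilityMeasure P]
    (n : ℕ) (hn : 1 ≤ n) (W : Fin n → Set S) (hWmeas : ∀ i, MeasurableSet (W i))
    (hWpos : 0 < P (⋂ i, W i))
    (δ : ℝ) (hδ0 : 0 ≤ δ) (hδ1 : δ ≤ 1)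
    (t : ℕ) (ht : 1 ≤ t) :
    (1 / (n : ℝ) ^ t) *
      ∑ I : Fin t → Fin n,
        (P ({ω : S | (1 - δ) * n < (Nat.card {i : Fin n // ω ∈ W i} : ℝ)}ᶜ ∩
            ⋂ k, W (I k))).toReal / (P (⋂ k, W (I k))).toReal
      ≤ (1 - δ) ^ t / (P (⋂ i, W i)).toReal := by
  classical
  set B : Set S := {ω : S | (1 - δ) * n < (Nat.card {i : Fin n // ω ∈ W i} : ℝ)}ᶜ with hBdef
  have hPW : (0 : ℝ) < (P (⋂ i, W i)).toReal :=
    ENNReal.toReal_pos hWpos.ne' (measure_ne_top P _)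
  have h1δ : (0 : ℝ) ≤ 1 - δ := by linarith
  have hδn : (0 : ℝ) ≤ (1 - δ) * n := mul_nonneg h1δ (Nat.cast_nonneg n)
  -- the atoms of the partition generated by the `W i`
  set C : Finset (Fin n) → Set S := fun T => {ω : S | ∀ i, ω ∈ W i ↔ i ∈ T} with hCdef
  have hCmeas : ∀ T, MeasurableSet (C T) := by
    intro T
    have hCe : C T = ⋂ i, (if i ∈ T then W i else (W i)ᶜ) := by
      ext ω
      simp only [hCdef, Set.mem_setOf_eq, Set.mem_iInter]
      constructor
      · intro h i
        by_cases hi : i ∈ T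
        · rw [if_pos hi]; exact (h i).mpr hi
        · rw [if_neg hi]; exact fun hw => hi ((h i).mp hw)
      · intro h i
        by_cases hi : i ∈ T
        · have := h i; rw [if_pos hi] at this; exact ⟨fun _ => hi, fun _ => this⟩
        · have := h i; rw [if_neg hi] at this
          exact ⟨fun hw => absurd hw this, fun hT => absurd hT hi⟩
    rw [hCe]
    exact MeasurableSet.iInter fun i => by
      by_cases hi : i ∈ T
      · rw [if_pos hi]; exact hWmeas i
      · rw [if_neg hi]; exact (hWmeas i).compl
  have hCover : ∀ ω : S, ω ∈ C (Finset.univ.filter fun i => ω ∈ W i) := by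
    intro ω i; simp [hCdef]
  have hCdisj : ∀ T T' : Finset (Fin n), T ≠ T' → Disjoint (C T) (C T') := by
    intro T T' hne
    rw [Set.disjoint_left]
    intro ω hT hT'
    exact hne (Finset.ext fun i => ((hT i).symm.trans (hT' i)))
  -- computing `Nat.card` on an atom
  have hcard : ∀ (ω : S) (T : Finset (Fin n)), ω ∈ C T →
      Nat.card {i : Fin n // ω ∈ W i} = T.card := by
    intro ω T h
    calc Nat.card {i : Fin n // ω ∈ W i}
        = Nat.card {i : Fin n // i ∈ T} := Nat.card_congr (Equiv.subtypeEquivRight h)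
      _ = T.card := Nat.card_eq_finsetCard T
  -- decomposition of a measurable set into atoms
  have hdecomp : ∀ X : Set S, MeasurableSet X →
      P X = ∑ T : Finset (Fin n), P (X ∩ C T) := by
    intro X hX
    have hXeq : X = ⋃ T ∈ (Finset.univ : Finset (Finset (Fin n))), X ∩ C T := by
      ext ω
      simp only [Set.mem_iUnion, Set.mem_inter_iff]
      constructor
      · intro hω
        exact ⟨_, Finset.mem_univ _, hω, hCover ω⟩
      · rintro ⟨T, _, hω, _⟩; exact hω
    conv_lhs => rw [hXeq]
    rw [measure_biUnion_finset
      (fun T _ T' _ hne => ((hCdisj T T' hne).mono Set.inter_subset_right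
        Set.inter_subset_right)) (fun T _ => hX.inter (hCmeas T))]
  -- measurability of B
  have hBmeas : MeasurableSet B := by
    have hBe : B = ⋃ T ∈ Finset.univ.filter
        (fun T : Finset (Fin n) => ¬ ((1 - δ) * n < (T.card : ℝ))), C T := by
      ext ω
      simp only [hBdef, Set.mem_compl_iff, Set.mem_setOf_eq, Set.mem_iUnion,
        Finset.mem_filter, Finset.mem_univ, true_and]
      constructor
      · intro h
        refine ⟨Finset.univ.filter fun i => ω ∈ W i, ?_, hCover ω⟩
        rwa [← hcard ω _ (hCover ω)]
      · rintro ⟨T, hT, hωT⟩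
        rwa [hcard ω T hωT]
    rw [hBe]
    exact (Finset.univ.filter _).measurableSet_biUnion fun T _ => hCmeas T
  -- the main estimate on the sum of numerators
  have hmain : ∑ I : Fin t → Fin n, (P (B ∩ ⋂ k, W (I k))).toReal ≤ ((1 - δ) * n) ^ t := by
    have hstep : ∀ I : Fin t → Fin n, (P (B ∩ ⋂ k, W (I k))).toReal
        = ∑ T : Finset (Fin n), (P (B ∩ (⋂ k, W (I k)) ∩ C T)).toReal := by
      intro I
      rw [hdecomp _ (hBmeas.inter (MeasurableSet.iInter fun k => hWmeas _)),
        ENNReal.toReal_sum (fun T _ => measure_ne_top P _)]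
    calc ∑ I : Fin t → Fin n, (P (B ∩ ⋂ k, W (I k))).toReal
        = ∑ T : Finset (Fin n), ∑ I : Fin t → Fin n,
            (P (B ∩ (⋂ k, W (I k)) ∩ C T)).toReal := by
          rw [← Finset.sum_comm]; exact Finset.sum_congr rfl fun I _ => hstep I
      _ ≤ ∑ T : Finset (Fin n), ((1 - δ) * n) ^ t * (P (C T)).toReal := by
          refine Finset.sum_le_sum fun T _ => ?_
          by_cases hT : (T.card : ℝ) ≤ (1 - δ) * n
          · -- small atoms: count the functions landing in T
            have hterm : ∀ I : Fin t → Fin n, (P (B ∩ (⋂ k, W (I k)) ∩ C T)).toReal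
                ≤ if (∀ k, I k ∈ T) then (P (C T)).toReal else 0 := by
              intro I
              by_cases hI : ∀ k, I k ∈ T
              · rw [if_pos hI]
                exact ENNReal.toReal_mono (measure_ne_top P _) (measure_mono (by
                  intro ω hω; exact hω.2))
              · rw [if_neg hI]
                push_neg at hI
                obtain ⟨k, hk⟩ := hI
                have : B ∩ (⋂ k, W (I k)) ∩ C T = ∅ := by
                  ext ω
                  simp only [Set.mem_inter_iff, Set.mem_iInter, Set.mem_empty_iff_false,
                    iff_false, not_and]
                  rintro ⟨_, hωA⟩ hωT
                  exact hk ((hωT (I k)).mp (hωA k))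
                simp [this]
            calc ∑ I : Fin t → Fin n, (P (B ∩ (⋂ k, W (I k)) ∩ C T)).toReal
                ≤ ∑ I : Fin t → Fin n,
                    (if (∀ k, I k ∈ T) then (P (C T)).toReal else 0) :=
                  Finset.sum_le_sum fun I _ => hterm I
              _ = (Finset.univ.filter fun I : Fin t → Fin n => ∀ k, I k ∈ T).card
                    * (P (C T)).toReal := by
                  rw [Finset.sum_ite, Finset.sum_const, Finset.sum_const_zero, add_zero,
                    nsmul_eq_mul]
              _ = ((T.card : ℝ)) ^ t * (P (C T)).toReal := by
                  congr 1
                  have : (Finset.univ.filter fun I : Fin t → Fin n => ∀ k, I k ∈ T)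
                      = Fintype.piFinset fun _ : Fin t => T := by
                    ext I; simp [Fintype.mem_piFinset]
                  rw [this, Fintype.card_piFinset]
                  push_cast
                  simp
              _ ≤ ((1 - δ) * n) ^ t * (P (C T)).toReal :=
                  mul_le_mul_of_nonneg_right
                    (pow_le_pow_left₀ (Nat.cast_nonneg _) hT t) ENNReal.toReal_nonneg
          · -- big atoms don't meet B
            push_neg at hT
            have hBC : ∀ I : Fin t → Fin n, B ∩ (⋂ k, W (I k)) ∩ C T = ∅ := by
              intro I
              ext ω
              simp only [Set.mem_inter_iff, Set.mem_empty_iff_false, iff_false, not_and]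
              rintro ⟨hωB, _⟩ hωT
              rw [hBdef, Set.mem_compl_iff, Set.mem_setOf_eq, hcard ω T hωT] at hωB
              exact hωB hT
            simp only [hBC, measure_empty, ENNReal.toReal_zero, Finset.sum_const_zero]
            exact mul_nonneg (pow_nonneg hδn t) ENNReal.toReal_nonneg
      _ = ((1 - δ) * n) ^ t * ∑ T : Finset (Fin n), (P (C T)).toReal := by
          rw [Finset.mul_sum]
      _ = ((1 - δ) * n) ^ t := by
          have : ∑ T : Finset (Fin n), (P (C T)).toReal = 1 := by
            have h1 : P (Set.univ : Set S) = ∑ T : Finset (Fin n), P (Set.univ ∩ C T) :=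
              hdecomp Set.univ MeasurableSet.univ
            simp only [Set.univ_inter] at h1
            rw [← ENNReal.toReal_sum (fun T _ => measure_ne_top P _), ← h1,
              measure_univ, ENNReal.toReal_one]
          rw [this, mul_one]
  -- assembling
  have hA : ∀ I : Fin t → Fin n,
      (P (⋂ i, W i)).toReal ≤ (P (⋂ k, W (I k))).toReal := by
    intro I
    exact ENNReal.toReal_mono (measure_ne_top P _)
      (measure_mono (Set.subset_iInter fun k => Set.iInter_subset W (I k)))
  have hnt : (0 : ℝ) < (n : ℝ) ^ t := by
    have : (0:ℝ) < (n:ℝ) := by exact_mod_cast Nat.pos_of_ne_zero (by omega)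
    positivity
  calc (1 / (n : ℝ) ^ t) * ∑ I : Fin t → Fin n,
        (P (B ∩ ⋂ k, W (I k))).toReal / (P (⋂ k, W (I k))).toReal
      ≤ (1 / (n : ℝ) ^ t) * ∑ I : Fin t → Fin n,
        (P (B ∩ ⋂ k, W (I k))).toReal / (P (⋂ i, W i)).toReal := by
        refine mul_le_mul_of_nonneg_left (Finset.sum_le_sum fun I _ => ?_)
          (by positivity)
        exact div_le_div_of_nonneg_left ENNReal.toReal_nonneg hPW (hA I)
    _ = (1 / (n : ℝ) ^ t) * ((∑ I : Fin t → Fin n,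
        (P (B ∩ ⋂ k, W (I k))).toReal) / (P (⋂ i, W i)).toReal) := by
        rw [Finset.sum_div]
    _ ≤ (1 / (n : ℝ) ^ t) * (((1 - δ) * n) ^ t / (P (⋂ i, W i)).toReal) := by
        refine mul_le_mul_of_nonneg_left ?_ (by positivity)
        exact div_le_div_of_nonneg_right hmain hPW.le
    _ = (1 - δ) ^ t / (P (⋂ i, W i)).toReal := by
        rw [mul_pow]
        field_simp
end

section
/- Let 𝒳, 𝒴 be finite sets, μ a probability distribution on 𝒳 × 𝒴, and n > m ≥ 1 integers with C = {m+1, …, n}. Consider the probability space in which (X_1, Y_1), …, (X_n, Y_n) are i.i.d. with common distribution μ, and D_1, …, D_m are i.i.d. uniform bits independent of all the (X_i, Y_i). For i ∈ {1,…,m}, set M_i = X_i if D_i = 0 and M_i = Y_i if D_i = 1, and Ω_i = (D_i, M_i). Let Ω = (Ω_1, …, Ω_m, X_C, Y_C), where X_C = (X_i)_{i∈C} and Y_C = (Y_i)_{i∈C}. Then X_{[n]} = (X_1,…,X_n) and Y_{[n]} = (Y_1,…,Y_n) are conditionally independent given Ω: for every value ω with P(Ω = ω) > 0 and all x ∈ 𝒳^n,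 y ∈ 𝒴^n, P(X_{[n]} = x, Y_{[n]} = y | Ω = ω) = P(X_{[n]} = x | Ω = ω) · P(Y_{[n]} = y | Ω = ω). -/
/-!
Fix `ω`. The bits `D` are read off `ω`, so for given `x, y` at most one outcome has
`X = x`, `Y = y`, `Ω = ω`, and its weight is `2⁻ᵐ ∏ᵢ [(xᵢ, yᵢ) compatible with ω] μ(xᵢ, yᵢ)`.
Each factor is supported on a single row (`i ≤ m`, `Dᵢ = 0`: `xᵢ` is revealed), a single
column (`Dᵢ = 1`: `yᵢ` is revealed) or a single point (`i ∈ C`), so it is a rank-one matrix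
in `(xᵢ, yᵢ)`. Hence the joint weight `P(x, y)` has rank one, and for such a matrix
`P(x, y) · ∑ P = (∑_{y'} P(x, y')) · (∑_{x'} P(x', y))`, which is the claim.
-/

/-- The outcome space: the `n` question pairs together with the `m` coin flips `D_i`. -/
abbrev Stmt3.Outc (𝒳 𝒴 : Type) (n m : ℕ) : Type :=
  (Fin n → 𝒳 × 𝒴) × (Fin m → Bool)

/-- The probability of an outcome: the questions are i.i.d. `μ` and the bits are uniform. -/
noncomputable def Stmt3.prob {𝒳 𝒴 : Type} [Fintype 𝒳] [Fintype 𝒴]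
    {n m : ℕ} (μ : 𝒳 × 𝒴 → ℝ) (o : Stmt3.Outc 𝒳 𝒴 n m) : ℝ :=
  (∏ i, μ (o.1 i)) * (1 / 2) ^ m

/-- The value of the dependency-breaking variable
`Ω = (Ω_1, …, Ω_m, X_C, Y_C)` where `Ω_i = (D_i, M_i)`, `M_i = X_i` if `D_i = 0`
(encoded `false`) and `M_i = Y_i` if `D_i = 1` (encoded `true`), and
`C = {m+1, …, n}` is encoded as the indices `i : Fin n` with `m ≤ i`. -/
def Stmt3.Om {𝒳 𝒴 : Type} {n m : ℕ} (hmn : m < n) (o : Stmt3.Outc 𝒳 𝒴 n m) :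
    (Fin m → Bool × (𝒳 ⊕ 𝒴)) × ({i : Fin n // m ≤ (i : ℕ)} → 𝒳 × 𝒴) :=
  (fun i => (o.2 i,
      if o.2 i then Sum.inr (o.1 (Fin.castLE hmn.le i)).2
      else Sum.inl (o.1 (Fin.castLE hmn.le i)).1),
   fun i => o.1 i.1)

open Finset

section RankLeOne

variable {α β R : Type*}

/-- All `2 × 2` minors of `f`, read as an `α × β` matrix, vanish. -/
def RankLeOne [Mul R] (f : α → β → R) : Prop :=
  ∀ a a' b b', f a b * f a' b' = f a b' * f a' b

theorem rankLeOne_of_ne_zero_imp_fst_eq [CommMonoidWithZero R] {f : α → β → R}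
    (h : ∀ a a' b b', f a b ≠ 0 → f a' b' ≠ 0 → a = a') : RankLeOne f := by
  intro a a' b b'
  by_cases ha : a = a'
  · subst ha
    exact mul_comm _ _
  · have hzero : ∀ b b', f a b * f a' b' = 0 := fun b b' => by
      by_contra hne
      exact ha (h _ _ _ _ (left_ne_zero_of_mul hne) (right_ne_zero_of_mul hne))
    rw [hzero, hzero]

theorem rankLeOne_of_ne_zero_imp_snd_eq [CommMonoidWithZero R] {f : α → β → R}
    (h : ∀ a a' b b', f a b ≠ 0 → f a' b' ≠ 0 → b = b') : RankLeOne f := by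
  intro a a' b b'
  by_cases hb : b = b'
  · subst hb
    rfl
  · have hzero : ∀ a a', f a b * f a' b' = 0 := fun a a' => by
      by_contra hne
      exact hb (h _ _ _ _ (left_ne_zero_of_mul hne) (right_ne_zero_of_mul hne))
    rw [hzero, mul_comm, hzero]

theorem RankLeOne.mul_const [CommMonoid R] {f : α → β → R} (hf : RankLeOne f) (c : R) :
    RankLeOne fun a b => f a b * c := by
  intro a a' b b'
  rw [mul_mul_mul_comm, hf, mul_mul_mul_comm]

theorem RankLeOne.pi_prod {ι : Type*} [Fintype ι] [CommMonoid R] {f : ι → α → β → R}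
    (hf : ∀ i, RankLeOne (f i)) :
    RankLeOne fun (x : ι → α) (y : ι → β) => ∏ i, f i (x i) (y i) := by
  intro x x' y y'
  simp only [← prod_mul_distrib]
  exact prod_congr rfl fun i _ => hf i _ _ _ _

theorem RankLeOne.mul_sum_sum [Fintype α] [Fintype β] [CommSemiring R] {f : α → β → R}
    (hf : RankLeOne f) (a : α) (b : β) :
    f a b * ∑ a', ∑ b', f a' b' = (∑ b', f a b') * ∑ a', f a' b := by
  rw [sum_mul_sum, sum_comm, mul_sum]
  refine sum_congr rfl fun b' _ => ?_
  rw [mul_sum]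
  exact sum_congr rfl fun a' _ => hf a a' b b'

end RankLeOne

section CondIndep

variable {Ω α β R : Type*} [Fintype Ω] [DecidableEq α] [DecidableEq β]

theorem sum_ite_eq_sum_sum_ite_and [Fintype β] [AddCommMonoid R] (Y : Ω → β)
    (E : Ω → Prop) [DecidablePred E] (w : Ω → R) :
    (∑ o, if E o then w o else 0) = ∑ y, ∑ o, if Y o = y ∧ E o then w o else 0 := by
  rw [sum_comm]
  refine sum_congr rfl fun o _ => ?_
  simp [ite_and]

theorem div_eq_div_mul_div_of_rankLeOne [Fintype α] [Fintype β] [Field R] (X : Ω → α) (Y : Ω → β)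
    (E : Ω → Prop) [DecidablePred E] (w : Ω → R)
    (h : RankLeOne fun x y => ∑ o, if X o = x ∧ Y o = y ∧ E o then w o else 0) (x : α) (y : β) :
    (∑ o, if X o = x ∧ Y o = y ∧ E o then w o else 0) / (∑ o, if E o then w o else 0)
      = ((∑ o, if X o = x ∧ E o then w o else 0) / (∑ o, if E o then w o else 0)) *
        ((∑ o, if Y o = y ∧ E o then w o else 0) / (∑ o, if E o then w o else 0)) := by
  set P := fun x y => ∑ o, if X o = x ∧ Y o = y ∧ E o then w o else 0
  have hX : (∑ o, if X o = x ∧ E o then w o else 0) = ∑ y', P x y' := by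
    rw [sum_ite_eq_sum_sum_ite_and Y]
    simp only [P, and_left_comm]
  have hY : (∑ o, if Y o = y ∧ E o then w o else 0) = ∑ x', P x' y := by
    rw [sum_ite_eq_sum_sum_ite_and X]
  have hE : (∑ o, if E o then w o else 0) = ∑ x', ∑ y', P x' y' := by
    rw [sum_ite_eq_sum_sum_ite_and X]
    refine sum_congr rfl fun x' _ => ?_
    rw [sum_ite_eq_sum_sum_ite_and Y]
    simp only [P, and_left_comm]
  rw [hX, hY, hE, div_mul_div_comm, ← h.mul_sum_sum]
  rcases eq_or_ne (∑ x', ∑ y', P x' y') 0 with hzero | hne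
  · simp [hzero]
  · rw [mul_div_mul_right _ _ hne]

end CondIndep

namespace Stmt3

variable {𝒳 𝒴 : Type} {n m : ℕ}

/-- The constraint that `Ω = ω` puts on the pair `(X_i, Y_i)` once the bits `D` are those
recorded in `ω`. -/
def Compatible (ω : (Fin m → Bool × (𝒳 ⊕ 𝒴)) × ({i : Fin n // m ≤ (i : ℕ)} → 𝒳 × 𝒴))
    (i : Fin n) (p : 𝒳 × 𝒴) : Prop :=
  if h : (i : ℕ) < m then
    (ω.1 ⟨i, h⟩).2 = if (ω.1 ⟨i, h⟩).1 then Sum.inr p.2 else Sum.inl p.1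
  else p = ω.2 ⟨i, not_lt.mp h⟩

instance [DecidableEq 𝒳] [DecidableEq 𝒴]
    (ω : (Fin m → Bool × (𝒳 ⊕ 𝒴)) × ({i : Fin n // m ≤ (i : ℕ)} → 𝒳 × 𝒴))
    (i : Fin n) (p : 𝒳 × 𝒴) : Decidable (Compatible ω i p) := by
  unfold Compatible
  infer_instance

theorem Om_eq_iff (hmn : m < n) (o : Outc 𝒳 𝒴 n m)
    (ω : (Fin m → Bool × (𝒳 ⊕ 𝒴)) × ({i : Fin n // m ≤ (i : ℕ)} → 𝒳 × 𝒴)) :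
    Om hmn o = ω ↔ o.2 = (fun j => (ω.1 j).1) ∧ ∀ i, Compatible ω i (o.1 i) := by
  constructor
  · rintro rfl
    refine ⟨rfl, fun i => ?_⟩
    by_cases h : (i : ℕ) < m
    · rw [Compatible, dif_pos h]
      rfl
    · rw [Compatible, dif_neg h]
      rfl
  · rintro ⟨hbits, hcompat⟩
    refine Prod.ext (funext fun j => Prod.ext (congrFun hbits j) ?_) (funext fun i => ?_)
    · have hj := hcompat (Fin.castLE hmn.le j)
      rw [Compatible, dif_pos (by exact j.isLt)] at hj
      simp only [Om, hbits]
      exact hj.symm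
    · have hi := hcompat i.1
      rw [Compatible, dif_neg (not_lt.mpr i.2)] at hi
      exact hi

theorem rankLeOne_compatible [DecidableEq 𝒳] [DecidableEq 𝒴] (μ : 𝒳 × 𝒴 → ℝ)
    (ω : (Fin m → Bool × (𝒳 ⊕ 𝒴)) × ({i : Fin n // m ≤ (i : ℕ)} → 𝒳 × 𝒴)) (i : Fin n) :
    RankLeOne fun a b => if Compatible ω i (a, b) then μ (a, b) else 0 := by
  have compatible_of_ne_zero {a b} (hab : (if Compatible ω i (a, b) then μ (a, b) else 0) ≠ 0) :
      Compatible ω i (a, b) := (ite_ne_right_iff.mp hab).1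
  by_cases hi : (i : ℕ) < m
  · cases hD : (ω.1 ⟨i, hi⟩).1
    · refine rankLeOne_of_ne_zero_imp_fst_eq fun a a' b b' hab hab' => ?_
      have hM := compatible_of_ne_zero hab
      have hM' := compatible_of_ne_zero hab'
      simp only [Compatible, dif_pos hi, hD] at hM hM'
      exact Sum.inl.inj (hM.symm.trans hM')
    · refine rankLeOne_of_ne_zero_imp_snd_eq fun a a' b b' hab hab' => ?_
      have hM := compatible_of_ne_zero hab
      have hM' := compatible_of_ne_zero hab'
      simp only [Compatible, dif_pos hi, hD] at hM hM'
      exact Sum.inr.inj (hM.symm.trans hM')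
  · refine rankLeOne_of_ne_zero_imp_fst_eq fun a a' b b' hab hab' => ?_
    have hC := compatible_of_ne_zero hab
    have hC' := compatible_of_ne_zero hab'
    rw [Compatible, dif_neg hi] at hC hC'
    exact congrArg Prod.fst (hC.trans hC'.symm)

theorem sum_ite_fst_snd_Om_eq_prod [Fintype 𝒳] [DecidableEq 𝒳] [Fintype 𝒴] [DecidableEq 𝒴]
    (μ : 𝒳 × 𝒴 → ℝ) (hmn : m < n)
    (ω : (Fin m → Bool × (𝒳 ⊕ 𝒴)) × ({i : Fin n // m ≤ (i : ℕ)} → 𝒳 × 𝒴))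
    (x : Fin n → 𝒳) (y : Fin n → 𝒴) :
    (∑ o : Outc 𝒳 𝒴 n m,
        if (fun i => (o.1 i).1) = x ∧ (fun i => (o.1 i).2) = y ∧ Om hmn o = ω
        then prob μ o else 0)
      = (∏ i, if Compatible ω i (x i, y i) then μ (x i, y i) else 0) * (1 / 2) ^ m := by
  have hcond (o : Outc 𝒳 𝒴 n m) :
      ((fun i => (o.1 i).1) = x ∧ (fun i => (o.1 i).2) = y ∧ Om hmn o = ω) ↔
        (o = (fun i => (x i, y i), fun j => (ω.1 j).1) ∧ ∀ i, Compatible ω i (x i, y i)) := by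
    rw [Om_eq_iff]
    constructor
    · rintro ⟨rfl, rfl, hbits, hcompat⟩
      exact ⟨Prod.ext rfl hbits, hcompat⟩
    · rintro ⟨rfl, hcompat⟩
      exact ⟨rfl, rfl, rfl, hcompat⟩
  simp only [hcond, ite_and, Fintype.sum_ite_eq', Fintype.prod_ite_zero, prob, ite_mul, zero_mul]

end Stmt3

open Stmt3 in
theorem stmt3_general (𝒳 𝒴 : Type) [Fintype 𝒳] [DecidableEq 𝒳] [Fintype 𝒴] [DecidableEq 𝒴]
    (μ : 𝒳 × 𝒴 → ℝ)
    (n m : ℕ) (hmn : m < n)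
    (ω : (Fin m → Bool × (𝒳 ⊕ 𝒴)) × ({i : Fin n // m ≤ (i : ℕ)} → 𝒳 × 𝒴))
    (x : Fin n → 𝒳) (y : Fin n → 𝒴) :
    (∑ o : Stmt3.Outc 𝒳 𝒴 n m,
        if (fun i => (o.1 i).1) = x ∧ (fun i => (o.1 i).2) = y ∧ Stmt3.Om hmn o = ω
        then Stmt3.prob μ o else 0) /
      (∑ o : Stmt3.Outc 𝒳 𝒴 n m, if Stmt3.Om hmn o = ω then Stmt3.prob μ o else 0)
    = ((∑ o : Stmt3.Outc 𝒳 𝒴 n m,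
          if (fun i => (o.1 i).1) = x ∧ Stmt3.Om hmn o = ω then Stmt3.prob μ o else 0) /
        (∑ o : Stmt3.Outc 𝒳 𝒴 n m, if Stmt3.Om hmn o = ω then Stmt3.prob μ o else 0)) *
      ((∑ o : Stmt3.Outc 𝒳 𝒴 n m,
          if (fun i => (o.1 i).2) = y ∧ Stmt3.Om hmn o = ω then Stmt3.prob μ o else 0) /
        (∑ o : Stmt3.Outc 𝒳 𝒴 n m, if Stmt3.Om hmn o = ω then Stmt3.prob μ o else 0)) := by
  refine div_eq_div_mul_div_of_rankLeOne (fun o i => (o.1 i).1) (fun o i => (o.1 i).2)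
    (fun o => Om hmn o = ω) (prob μ) ?_ x y
  simp only [sum_ite_fst_snd_Om_eq_prod]
  exact (RankLeOne.pi_prod fun i => rankLeOne_compatible μ ω i).mul_const _

/-- Conditioned on `Ω`, the question tuples `X_{[n]}` and `Y_{[n]}` are independent. -/
theorem stmt3 (𝒳 𝒴 : Type) [Fintype 𝒳] [DecidableEq 𝒳] [Fintype 𝒴] [DecidableEq 𝒴]
    (μ : 𝒳 × 𝒴 → ℝ) (hμ0 : ∀ p, 0 ≤ μ p) (hμ1 : ∑ p, μ p = 1)
    (n m : ℕ) (hm : 1 ≤ m) (hmn : m < n)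
    (ω : (Fin m → Bool × (𝒳 ⊕ 𝒴)) × ({i : Fin n // m ≤ (i : ℕ)} → 𝒳 × 𝒴))
    (hω : 0 < ∑ o : Stmt3.Outc 𝒳 𝒴 n m,
      if Stmt3.Om hmn o = ω then Stmt3.prob μ o else 0)
    (x : Fin n → 𝒳) (y : Fin n → 𝒴) :
    (∑ o : Stmt3.Outc 𝒳 𝒴 n m,
        if (fun i => (o.1 i).1) = x ∧ (fun i => (o.1 i).2) = y ∧ Stmt3.Om hmn o = ω
        then Stmt3.prob μ o else 0) /
      (∑ o : Stmt3.Outc 𝒳 𝒴 n m, if Stmt3.Om hmn o = ω then Stmt3.prob μ o else 0)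
    = ((∑ o : Stmt3.Outc 𝒳 𝒴 n m,
          if (fun i => (o.1 i).1) = x ∧ Stmt3.Om hmn o = ω then Stmt3.prob μ o else 0) /
        (∑ o : Stmt3.Outc 𝒳 𝒴 n m, if Stmt3.Om hmn o = ω then Stmt3.prob μ o else 0)) *
      ((∑ o : Stmt3.Outc 𝒳 𝒴 n m,
          if (fun i => (o.1 i).2) = y ∧ Stmt3.Om hmn o = ω then Stmt3.prob μ o else 0) /
        (∑ o : Stmt3.Outc 𝒳 𝒴 n m, if Stmt3.Om hmn o = ω then Stmt3.prob μ o else 0)) :=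
  stmt3_general 𝒳 𝒴 μ n m hmn ω x y
end

section
/- (Powers–Størmer inequality.) Let A and B be positive semidefinite d×d complex matrices. Then ‖A − B‖_F² ≤ ‖A² − B²‖₁, i.e., Tr((A − B)²) ≤ Σ_{j=1}^d |μ_j|, where μ_1, …, μ_d are the eigenvalues (with multiplicity) of the Hermitian matrix A² − B². -/
/-!
Write `A - B = U diag(c) U*` and `S = U diag(sign c) U*`. Conjugating by `U*` gives PSD matrices
`A', B'` with `A' - B' = diag(c)`, and then the diagonal of `A'² - B'²` is `cᵢ (A'ᵢᵢ + B'ᵢᵢ)`, so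
`Tr(S (A² - B²)) = ∑ |cᵢ| (A'ᵢᵢ + B'ᵢᵢ) ≥ ∑ |cᵢ| |A'ᵢᵢ - B'ᵢᵢ| = Tr((A - B)²)`. On the other hand,
in an eigenbasis of `A² - B²` the diagonal entries of `S` lie in `[-1, 1]`, so
`Tr(S (A² - B²)) ≤ ∑ |μⱼ|`.
-/

open scoped ComplexOrder

open Matrix

open Unitary

namespace Matrix

variable {n : Type*} [Fintype n] [DecidableEq n]

theorem trace_conjStarAlgAut {R : Type*} [CommSemiring R] [StarRing R]
    (u : unitary (Matrix n n R)) (X : Matrix n n R) :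
    trace (conjStarAlgAut R _ u X) = trace X := by
  rw [conjStarAlgAut_apply, trace_mul_cycle, coe_star_mul_self, one_mul]

theorem trace_diagonal_mul {R : Type*} [NonUnitalNonAssocSemiring R] (s : n → R)
    (X : Matrix n n R) : trace (diagonal s * X) = ∑ i, s i * X i i := by
  simp [trace, diagonal_mul]

theorem mul_self_sub_mul_self_apply_of_sub_eq_diagonal {R : Type*} [CommRing R]
    {A B : Matrix n n R} {c : n → R} (h : A - B = diagonal c) (i : n) :
    (A * A - B * B) i i = c i * (A i i + B i i) := by
  obtain rfl : A = B + diagonal c := by rw [← h, add_sub_cancel]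
  simp only [mul_add, add_mul, diagonal_mul_diagonal, sub_apply, add_apply, diagonal_mul,
    mul_diagonal, diagonal_apply_eq]
  ring

variable {𝕜 : Type*} [RCLike 𝕜]

open RCLike

theorem re_mul_diagonal_mul_star_apply (W : Matrix n n 𝕜) (s : n → ℝ) (j : n) :
    re ((W * diagonal (ofReal ∘ s) * star W : Matrix n n 𝕜) j j) = ∑ i, s i * ‖W j i‖ ^ 2 := by
  rw [mul_apply, map_sum]
  refine Finset.sum_congr rfl fun i _ => ?_
  rw [mul_diagonal, star_apply, RCLike.star_def, Function.comp_apply, mul_right_comm,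
    RCLike.mul_conj, ← ofReal_pow, re_ofReal_mul, ofReal_re, mul_comm]

theorem sum_norm_sq_unitary_row_eq_one (u : unitary (Matrix n n 𝕜)) (j : n) :
    ∑ i, ‖(u : Matrix n n 𝕜) j i‖ ^ 2 = 1 := by
  simpa using (re_mul_diagonal_mul_star_apply (u : Matrix n n 𝕜) 1 j).symm

theorem abs_re_conjStarAlgAut_diagonal_apply_le_one (u : unitary (Matrix n n 𝕜)) {s : n → ℝ}
    (hs : ∀ i, |s i| ≤ 1) (j : n) :
    |re (conjStarAlgAut 𝕜 _ u (diagonal (ofReal ∘ s)) j j)| ≤ 1 := by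
  rw [conjStarAlgAut_apply, re_mul_diagonal_mul_star_apply, ← sum_norm_sq_unitary_row_eq_one u j]
  refine (Finset.abs_sum_le_sum_abs _ _).trans (Finset.sum_le_sum fun i _ => ?_)
  rw [abs_mul, abs_pow, abs_norm]
  exact mul_le_of_le_one_left (sq_nonneg _) (hs i)

theorem IsHermitian.re_trace_conjStarAlgAut_diagonal_mul_le {M : Matrix n n 𝕜}
    (hM : M.IsHermitian) (u : unitary (Matrix n n 𝕜)) {s : n → ℝ} (hs : ∀ i, |s i| ≤ 1) :
    re (trace (conjStarAlgAut 𝕜 _ u (diagonal (ofReal ∘ s)) * M)) ≤ ∑ j, |hM.eigenvalues j| := by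
  set V := hM.eigenvectorUnitary
  have h : trace (conjStarAlgAut 𝕜 _ u (diagonal (ofReal ∘ s)) * M) =
      trace (diagonal (ofReal ∘ hM.eigenvalues) *
        conjStarAlgAut 𝕜 _ (star V * u) (diagonal (ofReal ∘ s))) := by
    rw [← trace_conjStarAlgAut (star V), map_mul, ← conjStarAlgAut_mul_apply,
      hM.conjStarAlgAut_star_eigenvectorUnitary, trace_mul_comm]
  rw [h, trace_diagonal_mul, map_sum]
  refine Finset.sum_le_sum fun j _ => ?_
  rw [Function.comp_apply, re_ofReal_mul]
  exact (le_abs_self _).trans <| (abs_mul _ _).trans_le <|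
    mul_le_of_le_one_right (abs_nonneg _) (abs_re_conjStarAlgAut_diagonal_apply_le_one _ hs j)

theorem PosSemidef.sum_sq_le_re_trace_diagonal_mul_sq_sub_sq {A B : Matrix n n 𝕜}
    (hA : A.PosSemidef) (hB : B.PosSemidef) {c s : n → ℝ} (hAB : A - B = diagonal (ofReal ∘ c))
    (hs : ∀ i, s i * c i = |c i|) :
    ∑ i, c i ^ 2 ≤ re (trace (diagonal (ofReal ∘ s) * (A * A - B * B))) := by
  rw [trace_diagonal_mul, map_sum]
  refine Finset.sum_le_sum fun i _ => ?_
  have hc : c i = re (A i i) - re (B i i) := by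
    simpa using congr(re ($hAB i i)).symm
  have ha : 0 ≤ re (A i i) := (RCLike.nonneg_iff.mp hA.diag_nonneg).1
  have hb : 0 ≤ re (B i i) := (RCLike.nonneg_iff.mp hB.diag_nonneg).1
  rw [mul_self_sub_mul_self_apply_of_sub_eq_diagonal hAB, Function.comp_apply,
    Function.comp_apply, ← mul_assoc, ← ofReal_mul, hs, re_ofReal_mul, map_add]
  calc c i ^ 2 = |c i| * |re (A i i) - re (B i i)| := by rw [← hc, ← sq_abs, sq]
    _ ≤ |c i| * (re (A i i) + re (B i i)) := by
      gcongr; exact abs_sub_le_iff.mpr ⟨by linarith, by linarith⟩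

end Matrix

theorem stmt8_general (d : ℕ) (A B : Matrix (Fin d) (Fin d) ℂ)
    (hA : A.PosSemidef) (hB : B.PosSemidef)
    (hM : (A * A - B * B).IsHermitian) :
    (Matrix.trace ((A - B) * (A - B))).re ≤ ∑ j, |hM.eigenvalues j| := by
  have hC := hA.isHermitian.sub hB.isHermitian
  set U := hC.eigenvectorUnitary
  set φ := conjStarAlgAut ℂ _ (star U)
  set c := hC.eigenvalues
  set S : Matrix (Fin d) (Fin d) ℂ :=
    diagonal (RCLike.ofReal ∘ fun i => (SignType.sign (c i) : ℝ))
  have hφ_inv : ∀ X, φ (conjStarAlgAut ℂ _ U X) = X := fun X => by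
    rw [← conjStarAlgAut_mul_apply, star_mul_self, map_one, StarAlgEquiv.one_apply]
  calc (trace ((A - B) * (A - B))).re = ∑ i, c i ^ 2 := by
        rw [← trace_conjStarAlgAut (star U), map_mul, hC.conjStarAlgAut_star_eigenvectorUnitary,
          diagonal_mul_diagonal, trace_diagonal]
        simp [sq, c]
    _ ≤ (trace (S * (φ A * φ A - φ B * φ B))).re := by
        refine PosSemidef.sum_sq_le_re_trace_diagonal_mul_sq_sub_sq (𝕜 := ℂ) ?_ ?_ ?_
          fun i => sign_mul_self (c i)
        · rw [conjStarAlgAut_star_apply]; exact hA.conjTranspose_mul_mul_same _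
        · rw [conjStarAlgAut_star_apply]; exact hB.conjTranspose_mul_mul_same _
        · rw [← map_sub, hC.conjStarAlgAut_star_eigenvectorUnitary]
    _ = (trace (conjStarAlgAut ℂ _ U S * (A * A - B * B))).re := by
        rw [← map_mul, ← map_mul, ← map_sub, ← hφ_inv S, ← map_mul, hφ_inv, trace_conjStarAlgAut]
    _ ≤ ∑ j, |hM.eigenvalues j| :=
        hM.re_trace_conjStarAlgAut_diagonal_mul_le U fun i => by cases SignType.sign (c i) <;> simp

/-- Powers–Størmer inequality: for positive semidefinite matrices `A` and `B`,
`‖A − B‖_F² ≤ ‖A² − B²‖₁`. -/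
theorem stmt8 (d : ℕ) (hd : 1 ≤ d) (A B : Matrix (Fin d) (Fin d) ℂ)
    (hA : A.PosSemidef) (hB : B.PosSemidef)
    (hM : (A * A - B * B).IsHermitian) :
    (Matrix.trace ((A - B) * (A - B))).re ≤ ∑ j, |hM.eigenvalues j| :=
  stmt8_general d A B hA hB hM
end

section
/- Let d ≥ 1, let v_1, …, v_d be an orthonormal basis of ℂ^d, let λ_1, …, λ_d ≥ 0, ψ = Σ_j √λ_j · (v_j ⊗ v_j) ∈ ℂ^d ⊗ ℂ^d, ρ = Σ_j λ_j v_j v_j†, and r = Σ_j √λ_j v_j v_j†. For i = 1, 2 let s_i be a positive semidefinite d×d matrix, A_i = s_i², and U_i a unitary d×d matrix such that U_i s_i r is positive semidefinite. Let γ_i = ‖((U_i s_i) ⊗ I_d)ψ‖₂ and assume γ_1, γ_2 > 0. Then ‖ γ_1^{-1}((U_1 s_1) ⊗ I_d)ψ − γ_2^{-1}((U_2 s_2) ⊗ I_d)ψ ‖₂² ≤ ‖ γ_1^{-2} r A_1 r − γ_2^{-2} r A_2 r ‖₁, where ‖M‖₁ denotes the trace norm of the Hermitian matrix M (the sum of the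 absolute values of its eigenvalues). -/
/-! Read `ψ` as the matrix `K = Σ_j √λ_j v_j v_jᵀ`: then `(M ⊗ I)ψ` is `M K`, and orthonormality
gives `K K† = r r†`, so the left side is the Hilbert–Schmidt norm `‖P - Q‖₂²` of
`P = γ₁⁻¹ U₁ s₁ r` and `Q = γ₂⁻¹ U₂ s₂ r`. These are positive semidefinite with
`P² = γ₁⁻² r A₁ r` and `Q² = γ₂⁻² r A₂ r`, so it remains to show `‖P - Q‖₂² ≤ ‖P² - Q²‖₁`.
In an eigenbasis of `P - Q` with eigenvalues `s_i`, the diagonal of `P² - Q²` is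
`s_i (P_ii + Q_ii)` with `|s_i| ≤ P_ii + Q_ii`, so `s_i² ≤ |(P² - Q²)_ii|`; and the diagonal of
a Hermitian matrix in any orthonormal basis has `ℓ¹` norm at most its trace norm. -/

open scoped ComplexOrder

open Matrix Kronecker

namespace Matrix

variable {ι l m n : Type*}

lemma isHermitian_sum_ofReal_smul_vecMulVec_star [Fintype ι] (μ : ι → ℝ)
    (v : ι → n → ℂ) : (∑ j, (μ j : ℂ) • vecMulVec (v j) (star (v j))).IsHermitian := by
  simp [IsHermitian, conjTranspose_sum, conjTranspose_smul]

variable [Fintype n]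

lemma mul_conjTranspose_self_apply_self (Z : Matrix m n ℂ) (i : m) :
    (Z * Zᴴ) i i = ((∑ j, ‖Z i j‖ ^ 2 : ℝ) : ℂ) := by
  push_cast
  simp [mul_apply, Complex.mul_conj, Complex.normSq_eq_norm_sq]

lemma sum_norm_sq_eq_re_trace_mul_conjTranspose [Fintype m] (Z : Matrix m n ℂ) :
    ∑ p : m × n, ‖Z p.1 p.2‖ ^ 2 = (Z * Zᴴ).trace.re := by
  simp only [trace, diag, mul_conjTranspose_self_apply_self, Complex.re_sum, Complex.ofReal_re,
    Fintype.sum_prod_type]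

lemma sum_norm_sq_apply_of_mem_unitaryGroup [DecidableEq n] {C : Matrix n n ℂ}
    (hC : C ∈ unitaryGroup n ℂ) (j : n) : ∑ i, ‖C i j‖ ^ 2 = 1 := by
  have h := mul_conjTranspose_self_apply_self Cᴴ j
  rw [conjTranspose_conjTranspose, ← star_eq_conjTranspose, Unitary.star_mul_self_of_mem hC,
    one_apply_eq] at h
  simpa using (Complex.ofReal_eq_one.mp h.symm)

lemma kronecker_one_mulVec_apply {R : Type*} [CommSemiring R] [Fintype m] [DecidableEq n]
    (M : Matrix l m R) (ψ : m × n → R) (p : l × n) :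
    ((M ⊗ₖ (1 : Matrix n n R)) *ᵥ ψ) p = (M * of fun a b => ψ (a, b)) p.1 p.2 := by
  rw [show ψ = vec (of fun a b => ψ (a, b))ᵀ from rfl, kronecker_mulVec_vec]
  simp [← transpose_mul]

lemma sum_vecMulVec_mul_conjTranspose {R : Type*} [CommRing R] [StarRing R] [Fintype ι]
    [DecidableEq ι] (x y : ι → n → R)
    (hy : ∀ j k, y j ⬝ᵥ star (y k) = if j = k then 1 else 0) :
    (∑ j, vecMulVec (x j) (y j)) * (∑ j, vecMulVec (x j) (y j))ᴴ =
      ∑ j, vecMulVec (x j) (star (x j)) := by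
  simp only [conjTranspose_sum, conjTranspose_vecMulVec, Finset.sum_mul, Finset.mul_sum,
    vecMulVec_mul_vecMulVec, vecMulVec_smul]
  simp [hy]

lemma sum_smul_vecMulVec_self_mul_conjTranspose [Fintype ι] [DecidableEq ι] {v : ι → n → ℂ}
    (hv : ∀ j k, star (v j) ⬝ᵥ v k = if j = k then 1 else 0) (μ : ι → ℂ) :
    (∑ j, μ j • vecMulVec (v j) (v j)) * (∑ j, μ j • vecMulVec (v j) (v j))ᴴ =
      (∑ j, μ j • vecMulVec (v j) (star (v j))) * (∑ j, μ j • vecMulVec (v j) (star (v j)))ᴴ := by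
  simp only [← smul_vecMulVec]
  rw [sum_vecMulVec_mul_conjTranspose _ _ fun j k => by
      rw [dotProduct_comm, hv]; simp only [eq_comm],
    sum_vecMulVec_mul_conjTranspose _ _ fun j k => by rw [star_star, hv]]

lemma mul_mul_conjTranspose_eq_of_mul_conjTranspose_eq [Fintype m] {K r : Matrix m n ℂ}
    (h : K * Kᴴ = r * rᴴ) (X : Matrix l m ℂ) : X * K * (X * K)ᴴ = X * r * (X * r)ᴴ := by
  simp only [conjTranspose_mul, Matrix.mul_assoc]
  rw [← Matrix.mul_assoc K, h, Matrix.mul_assoc]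

section Conjugation

open Unitary

variable [DecidableEq n]

lemma sum_norm_diag_conj_diagonal_le (C : unitaryGroup n ℂ) (μ : n → ℝ) :
    ∑ i, ‖conjStarAlgAut ℂ _ C (diagonal (RCLike.ofReal ∘ μ)) i i‖ ≤ ∑ j, |μ j| := by
  have hentry : ∀ i, conjStarAlgAut ℂ _ C (diagonal (RCLike.ofReal ∘ μ)) i i =
      ∑ j, (μ j : ℂ) * ((‖(C : Matrix n n ℂ) i j‖ ^ 2 : ℝ) : ℂ) := by
    intro i
    rw [conjStarAlgAut_apply, mul_apply]
    refine Finset.sum_congr rfl fun j _ => ?_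
    simp [mul_diagonal, mul_assoc, Complex.mul_conj, Complex.normSq_eq_norm_sq, mul_comm]
  calc ∑ i, ‖conjStarAlgAut ℂ _ C (diagonal (RCLike.ofReal ∘ μ)) i i‖
      ≤ ∑ i, ∑ j, |μ j| * ‖(C : Matrix n n ℂ) i j‖ ^ 2 := by
        refine Finset.sum_le_sum fun i _ => (hentry i ▸ norm_sum_le _ _).trans_eq ?_
        simp
    _ = ∑ j, |μ j| * ∑ i, ‖(C : Matrix n n ℂ) i j‖ ^ 2 := by
        rw [Finset.sum_comm]
        simp only [Finset.mul_sum]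
    _ = ∑ j, |μ j| := by simp [sum_norm_sq_apply_of_mem_unitaryGroup C.2]

lemma IsHermitian.sum_norm_diag_conj_le {H : Matrix n n ℂ} (hH : H.IsHermitian)
    (W : unitaryGroup n ℂ) :
    ∑ i, ‖conjStarAlgAut ℂ _ W H i i‖ ≤ ∑ j, |hH.eigenvalues j| := by
  have h := sum_norm_diag_conj_diagonal_le (W * hH.eigenvectorUnitary) hH.eigenvalues
  rwa [conjStarAlgAut_mul_apply, ← hH.spectral_theorem] at h

lemma PosSemidef.conjStarAlgAut {A : Matrix n n ℂ} (hA : A.PosSemidef)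
    (u : unitaryGroup n ℂ) : (conjStarAlgAut ℂ _ u A).PosSemidef := by
  simpa [conjStarAlgAut_apply, star_eq_conjTranspose] using
    hA.mul_mul_conjTranspose_same (u : Matrix n n ℂ)

lemma trace_conjStarAlgAut_s10 (u : unitaryGroup n ℂ) (A : Matrix n n ℂ) :
    (conjStarAlgAut ℂ _ u A).trace = A.trace := by
  rw [conjStarAlgAut_apply, trace_mul_cycle, coe_star_mul_self, one_mul]

lemma sq_le_norm_diag_mul_self_sub_mul_self {P Q : Matrix n n ℂ} (hP : P.PosSemidef)
    (hQ : Q.PosSemidef) {s : n → ℝ} (hPQ : P - Q = diagonal (RCLike.ofReal ∘ s)) (i : n) :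
    s i ^ 2 ≤ ‖(P * P - Q * Q) i i‖ := by
  obtain ⟨p, hp, hpP⟩ := RCLike.nonneg_iff_exists_ofReal.mp (hP.diag_nonneg (i := i))
  obtain ⟨q, hq, hqQ⟩ := RCLike.nonneg_iff_exists_ofReal.mp (hQ.diag_nonneg (i := i))
  have hs : s i = p - q := by
    have h := congr_fun₂ hPQ i i
    simp only [sub_apply, diagonal_apply_eq, Function.comp_apply, ← hpP, ← hqQ] at h
    exact_mod_cast h.symm
  have hdiag : (P * P - Q * Q) i i = (s i * (p + q) : ℝ) := by
    have h : (P * P - Q * Q) + (P * P - Q * Q) = (P - Q) * (P + Q) + (P + Q) * (P - Q) := by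
      noncomm_ring
    have h' := congr_fun₂ h i i
    rw [hPQ] at h'
    simp only [add_apply, diagonal_mul, mul_diagonal, Function.comp_apply, ← hpP, ← hqQ] at h'
    push_cast
    linear_combination h' / 2
  rw [hdiag, Complex.norm_real, Real.norm_eq_abs, abs_mul, abs_of_nonneg (by linarith : 0 ≤ p + q),
    sq, ← abs_mul_abs_self, hs]
  gcongr
  exact abs_sub_le_iff.mpr ⟨by linarith, by linarith⟩

theorem re_trace_sub_mul_sub_le_sum_abs_eigenvalues {P Q H : Matrix n n ℂ} (hP : P.PosSemidef)
    (hQ : Q.PosSemidef) (hH : H.IsHermitian) (hHPQ : H = P * P - Q * Q) :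
    ((P - Q) * (P - Q)).trace.re ≤ ∑ j, |hH.eigenvalues j| := by
  have hS : (P - Q).IsHermitian := hP.1.sub hQ.1
  set W := star hS.eigenvectorUnitary
  have hD : conjStarAlgAut ℂ _ W (P - Q) = diagonal (RCLike.ofReal ∘ hS.eigenvalues) :=
    hS.conjStarAlgAut_star_eigenvectorUnitary
  have htrace : ((P - Q) * (P - Q)).trace.re = ∑ i, hS.eigenvalues i ^ 2 := by
    rw [← trace_conjStarAlgAut_s10 W, map_mul, hD, diagonal_mul_diagonal, trace_diagonal]
    simp [sq]
  calc ((P - Q) * (P - Q)).trace.re = ∑ i, hS.eigenvalues i ^ 2 := htrace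
    _ ≤ ∑ i, ‖(conjStarAlgAut ℂ _ W P * conjStarAlgAut ℂ _ W P -
          conjStarAlgAut ℂ _ W Q * conjStarAlgAut ℂ _ W Q) i i‖ :=
        Finset.sum_le_sum fun i _ => sq_le_norm_diag_mul_self_sub_mul_self
          (hP.conjStarAlgAut W) (hQ.conjStarAlgAut W) (by rw [← map_sub, hD]) i
    _ = ∑ i, ‖conjStarAlgAut ℂ _ W H i i‖ := by rw [hHPQ, map_sub, map_mul, map_mul]
    _ ≤ ∑ j, |hH.eigenvalues j| := hH.sum_norm_diag_conj_le W

end Conjugation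

lemma smul_mul_self_eq_of_isHermitian [DecidableEq n] {U s r : Matrix n n ℂ}
    (hU : U ∈ unitaryGroup n ℂ) (hs : s.IsHermitian) (hr : r.IsHermitian)
    (h : (U * s * r).IsHermitian) (c : ℂ) :
    c • (U * s * r) * c • (U * s * r) = c ^ 2 • (r * (s * s) * r) := by
  have hUU : Uᴴ * U = 1 := by rw [← star_eq_conjTranspose, Unitary.star_mul_self_of_mem hU]
  calc c • (U * s * r) * c • (U * s * r) = c ^ 2 • ((U * s * r)ᴴ * (U * s * r)) := by
        rw [smul_mul_smul_comm, h.eq, sq]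
    _ = c ^ 2 • (r * s * (Uᴴ * U) * s * r) := by
        simp only [conjTranspose_mul, hs.eq, hr.eq, Matrix.mul_assoc]
    _ = c ^ 2 • (r * (s * s) * r) := by rw [hUU, Matrix.mul_one, Matrix.mul_assoc r]

end Matrix

theorem stmt10_general (d : ℕ) (v : Fin d → Fin d → ℂ)
    (hv : ∀ j k, star (v j) ⬝ᵥ v k = if j = k then 1 else 0)
    (lam : Fin d → ℝ)
    (ψ : Fin d × Fin d → ℂ)
    (hψ : ψ = fun p => ∑ j, (Real.sqrt (lam j) : ℂ) * v j p.1 * v j p.2)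
    (r : Matrix (Fin d) (Fin d) ℂ)
    (hr : r = ∑ j, (Real.sqrt (lam j) : ℂ) • Matrix.vecMulVec (v j) (star (v j)))
    (s₁ s₂ : Matrix (Fin d) (Fin d) ℂ) (hs₁ : s₁.PosSemidef) (hs₂ : s₂.PosSemidef)
    (A₁ A₂ : Matrix (Fin d) (Fin d) ℂ) (hA₁ : A₁ = s₁ * s₁) (hA₂ : A₂ = s₂ * s₂)
    (U₁ U₂ : Matrix (Fin d) (Fin d) ℂ)
    (hU₁ : U₁ ∈ Matrix.unitaryGroup (Fin d) ℂ)
    (hU₂ : U₂ ∈ Matrix.unitaryGroup (Fin d) ℂ)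
    (hp₁ : (U₁ * s₁ * r).PosSemidef) (hp₂ : (U₂ * s₂ * r).PosSemidef)
    (γ₁ γ₂ : ℝ)
    (hγ₁pos : 0 < γ₁) (hγ₂pos : 0 < γ₂)
    (T : Matrix (Fin d) (Fin d) ℂ)
    (hT : T = ((γ₁ : ℂ) ^ 2)⁻¹ • (r * A₁ * r) - ((γ₂ : ℂ) ^ 2)⁻¹ • (r * A₂ * r))
    (hTH : T.IsHermitian) :
    ∑ p, ‖(γ₁ : ℂ)⁻¹ * (((U₁ * s₁) ⊗ₖ (1 : Matrix (Fin d) (Fin d) ℂ)).mulVec ψ) p -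
          (γ₂ : ℂ)⁻¹ * (((U₂ * s₂) ⊗ₖ (1 : Matrix (Fin d) (Fin d) ℂ)).mulVec ψ) p‖ ^ 2
      ≤ ∑ j, |hTH.eigenvalues j| := by
  set K : Matrix (Fin d) (Fin d) ℂ := of fun a b => ψ (a, b)
  have hKr : K * Kᴴ = r * rᴴ := by
    have hK : K = ∑ j, (Real.sqrt (lam j) : ℂ) • vecMulVec (v j) (v j) := by
      ext a b
      simp [K, hψ, Matrix.sum_apply, vecMulVec_apply, mul_assoc]
    rw [hK, hr, sum_smul_vecMulVec_self_mul_conjTranspose hv]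
  have hrH : r.IsHermitian := hr ▸ isHermitian_sum_ofReal_smul_vecMulVec_star _ v
  set P := (γ₁ : ℂ)⁻¹ • (U₁ * s₁ * r)
  set Q := (γ₂ : ℂ)⁻¹ • (U₂ * s₂ * r)
  have hP : P.PosSemidef := hp₁.smul (by exact_mod_cast (inv_nonneg.mpr hγ₁pos.le))
  have hQ : Q.PosSemidef := hp₂.smul (by exact_mod_cast (inv_nonneg.mpr hγ₂pos.le))
  set E := (γ₁ : ℂ)⁻¹ • (U₁ * s₁) - (γ₂ : ℂ)⁻¹ • (U₂ * s₂)
  have hEr : E * r = P - Q := by simp [E, P, Q, Matrix.sub_mul]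
  calc _ = (E * K * (E * K)ᴴ).trace.re := by
        rw [← sum_norm_sq_eq_re_trace_mul_conjTranspose]
        simp [kronecker_one_mulVec_apply, E, Matrix.sub_mul, K]
    _ = ((P - Q) * (P - Q)).trace.re := by
        rw [mul_mul_conjTranspose_eq_of_mul_conjTranspose_eq hKr, hEr, (hP.1.sub hQ.1).eq]
    _ ≤ ∑ j, |hTH.eigenvalues j| := by
        refine re_trace_sub_mul_sub_le_sum_abs_eigenvalues hP hQ hTH ?_
        rw [hT, smul_mul_self_eq_of_isHermitian hU₁ hs₁.1 hrH hp₁.1, ← hA₁,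
          smul_mul_self_eq_of_isHermitian hU₂ hs₂.1 hrH hp₂.1, ← hA₂, inv_pow, inv_pow]

/-- For a symmetric pure state `ψ = Σ_j √λ_j (v_j ⊗ v_j)`, positive semidefinite `s_i`
with `A_i = s_i²`, unitaries `U_i` making `U_i s_i r` positive semidefinite, and
normalizations `γ_i = ‖((U_i s_i) ⊗ I)ψ‖₂ > 0`:
`‖γ₁⁻¹((U₁s₁)⊗I)ψ − γ₂⁻¹((U₂s₂)⊗I)ψ‖₂² ≤ ‖γ₁⁻² r A₁ r − γ₂⁻² r A₂ r‖₁`. -/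
theorem stmt10 (d : ℕ) (hd : 1 ≤ d) (v : Fin d → Fin d → ℂ)
    (hv : ∀ j k, star (v j) ⬝ᵥ v k = if j = k then 1 else 0)
    (lam : Fin d → ℝ) (hlam : ∀ j, 0 ≤ lam j)
    (ψ : Fin d × Fin d → ℂ)
    (hψ : ψ = fun p => ∑ j, (Real.sqrt (lam j) : ℂ) * v j p.1 * v j p.2)
    (ρ r : Matrix (Fin d) (Fin d) ℂ)
    (hρ : ρ = ∑ j, (lam j : ℂ) • Matrix.vecMulVec (v j) (star (v j)))
    (hr : r = ∑ j, (Real.sqrt (lam j) : ℂ) • Matrix.vecMulVec (v j) (star (v j)))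
    (s₁ s₂ : Matrix (Fin d) (Fin d) ℂ) (hs₁ : s₁.PosSemidef) (hs₂ : s₂.PosSemidef)
    (A₁ A₂ : Matrix (Fin d) (Fin d) ℂ) (hA₁ : A₁ = s₁ * s₁) (hA₂ : A₂ = s₂ * s₂)
    (U₁ U₂ : Matrix (Fin d) (Fin d) ℂ)
    (hU₁ : U₁ ∈ Matrix.unitaryGroup (Fin d) ℂ)
    (hU₂ : U₂ ∈ Matrix.unitaryGroup (Fin d) ℂ)
    (hp₁ : (U₁ * s₁ * r).PosSemidef) (hp₂ : (U₂ * s₂ * r).PosSemidef)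
    (γ₁ γ₂ : ℝ)
    (hγ₁ : γ₁ = Real.sqrt (∑ p, ‖(((U₁ * s₁) ⊗ₖ (1 : Matrix (Fin d) (Fin d) ℂ)).mulVec ψ) p‖ ^ 2))
    (hγ₂ : γ₂ = Real.sqrt (∑ p, ‖(((U₂ * s₂) ⊗ₖ (1 : Matrix (Fin d) (Fin d) ℂ)).mulVec ψ) p‖ ^ 2))
    (hγ₁pos : 0 < γ₁) (hγ₂pos : 0 < γ₂)
    (T : Matrix (Fin d) (Fin d) ℂ)
    (hT : T = ((γ₁ : ℂ) ^ 2)⁻¹ • (r * A₁ * r) - ((γ₂ : ℂ) ^ 2)⁻¹ • (r * A₂ * r))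
    (hTH : T.IsHermitian) :
    ∑ p, ‖(γ₁ : ℂ)⁻¹ * (((U₁ * s₁) ⊗ₖ (1 : Matrix (Fin d) (Fin d) ℂ)).mulVec ψ) p -
          (γ₂ : ℂ)⁻¹ * (((U₂ * s₂) ⊗ₖ (1 : Matrix (Fin d) (Fin d) ℂ)).mulVec ψ) p‖ ^ 2
      ≤ ∑ j, |hTH.eigenvalues j| :=
  stmt10_general d v hv lam ψ hψ r hr s₁ s₂ hs₁ hs₂ A₁ A₂ hA₁ hA₂ U₁ U₂ hU₁ hU₂ hp₁ hp₂ γ₁ γ₂ hγ₁pos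
    hγ₂pos T hT hTH
end

section
/- (Fuchs–van de Graaf inequalities.) Let ρ and σ be d×d density matrices (positive semidefinite complex matrices of trace 1). Define the fidelity F(ρ,σ) = Tr(√(√σ ρ √σ)), where √(·) denotes the positive semidefinite square root. Then 1 − F(ρ,σ) ≤ (1/2)‖ρ − σ‖₁ ≤ √(1 − F(ρ,σ)²), where ‖ρ − σ‖₁ is the trace norm of the Hermitian matrix ρ − σ, i.e., the sum of the absolute values of its eigenvalues. -/
/-!
Write `A = √ρ`, `B = √σ` and `P = √(B ρ B)`, so that `F = tr P` and `(AB)ᴴ(AB) = P²`. The polar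
decomposition `AB = W P`, with `W` a contraction, gives both `Re tr(AB) ≤ tr P` and
`tr P = tr(Wᴴ A B)`. For a Hermitian `X` and any `0 ≤ E ≤ 1` one has `2 Re tr(E X) - tr X ≤ ‖X‖₁`,
with equality when `E` is the spectral projection of `X` onto `[0, ∞)`.

Lower bound (Powers–Størmer): taking `X = ρ - σ` and `E` the spectral projection of `A - B`
gives `tr (A - B)² ≤ ‖ρ - σ‖₁`, while `tr (A - B)² = 2 - 2 Re tr(AB) ≥ 2 - 2F`.

Upper bound: let `R` be the spectral projection of `ρ - σ`, `p = tr ρR` and `q = tr σR`, so that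
`½‖ρ - σ‖₁ = p - q`. Splitting `tr P = tr(Wᴴ A R B) + tr(Wᴴ A (1 - R) B)` and applying the
Cauchy–Schwarz inequality for the Hilbert–Schmidt inner product to each term gives
`F ≤ √(pq) + √((1 - p)(1 - q))`, and this is at most `√(1 - (p - q)²)`.
-/

open scoped ComplexOrder

open Matrix

/-- The positive semidefinite square root of a positive semidefinite matrix (as defined in
Mathlib of December 2024, since removed). -/
noncomputable def Matrix.PosSemidef.sqrt {n 𝕜 : Type*} [Fintype n] [RCLike 𝕜] [DecidableEq n]
    {A : Matrix n n 𝕜} (hA : A.PosSemidef) : Matrix n n 𝕜 :=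
  hA.1.eigenvectorUnitary.1 * diagonal ((↑) ∘ (√·) ∘ hA.1.eigenvalues) *
  (star hA.1.eigenvectorUnitary : Matrix n n 𝕜)

open scoped MatrixOrder

lemma sqrt_mul_sqrt_add_sqrt_mul_sqrt_sq_le {p q : ℝ} (hp0 : 0 ≤ p) (hp1 : p ≤ 1) (hq0 : 0 ≤ q)
    (hq1 : q ≤ 1) : (√p * √q + √(1 - p) * √(1 - q)) ^ 2 ≤ 1 - (p - q) ^ 2 := by
  set a := √p
  set b := √q
  set c := √(1 - p)
  set e := √(1 - q)
  have ha : a ^ 2 = p := Real.sq_sqrt hp0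
  have hb : b ^ 2 = q := Real.sq_sqrt hq0
  have hc : c ^ 2 = 1 - p := Real.sq_sqrt (sub_nonneg.mpr hp1)
  have he : e ^ 2 = 1 - q := Real.sq_sqrt (sub_nonneg.mpr hq1)
  have h1 : (a * b + c * e) ^ 2 = 1 - (a * e - b * c) ^ 2 := by
    linear_combination (b ^ 2 + e ^ 2) * (ha + hc) + hb + he
  have h2 : p - q = (a * e - b * c) * (a * e + b * c) := by
    linear_combination (-e ^ 2) * ha - p * he + c ^ 2 * hb + q * hc
  have h3 : (a * e + b * c) ^ 2 ≤ 1 := by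
    nlinarith [sq_nonneg (a * b - c * e)]
  rw [h1, h2, mul_pow]
  nlinarith [mul_le_of_le_one_right (sq_nonneg (a * e - b * c)) h3]

namespace Matrix

variable {n 𝕜 : Type*} [Fintype n] [DecidableEq n] [RCLike 𝕜]

section FunctionalCalculus

lemma cfc_mul_cfc (f g : ℝ → ℝ) (A : Matrix n n 𝕜) :
    cfc f A * cfc g A = cfc (fun x => f x * g x) A :=
  (cfc_mul f g A (finite_real_spectrum.continuousOn f) (finite_real_spectrum.continuousOn g)).symm

lemma cfc_sub_cfc (f g : ℝ → ℝ) (A : Matrix n n 𝕜) :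
    cfc f A - cfc g A = cfc (fun x => f x - g x) A :=
  (cfc_sub f g A (finite_real_spectrum.continuousOn f) (finite_real_spectrum.continuousOn g)).symm

variable {A : Matrix n n 𝕜}

lemma cfc_mul_self_eq (hA : A.IsHermitian) (f : ℝ → ℝ) :
    cfc f A * A = cfc (fun x => f x * x) A := by
  conv_lhs => arg 2; rw [← cfc_id' ℝ A hA.isSelfAdjoint]
  rw [cfc_mul_cfc]

lemma self_mul_cfc_eq (hA : A.IsHermitian) (f : ℝ → ℝ) :
    A * cfc f A = cfc (fun x => x * f x) A := by
  conv_lhs => arg 1; rw [← cfc_id' ℝ A hA.isSelfAdjoint]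
  rw [cfc_mul_cfc]

lemma cfc_sub_self_eq (hA : A.IsHermitian) (f : ℝ → ℝ) :
    cfc f A - A = cfc (fun x => f x - x) A := by
  conv_lhs => arg 2; rw [← cfc_id' ℝ A hA.isSelfAdjoint]
  rw [cfc_sub_cfc]

lemma IsHermitian.trace_cfc (hA : A.IsHermitian) (f : ℝ → ℝ) :
    (cfc f A).trace = ∑ i, (f (hA.eigenvalues i) : 𝕜) := by
  rw [hA.cfc_eq, IsHermitian.cfc, Unitary.conjStarAlgAut_apply, trace_mul_cycle,
    Unitary.coe_star_mul_self, one_mul, trace_diagonal]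
  rfl

lemma IsHermitian.re_trace_cfc (hA : A.IsHermitian) (f : ℝ → ℝ) :
    RCLike.re (cfc f A).trace = ∑ i, f (hA.eigenvalues i) := by
  simp [hA.trace_cfc]

lemma PosSemidef.sqrt_eq_cfc (hA : A.PosSemidef) : hA.sqrt = cfc Real.sqrt A := by
  rw [hA.1.cfc_eq, IsHermitian.cfc, Unitary.conjStarAlgAut_apply]
  rfl

lemma PosSemidef.posSemidef_sqrt (hA : A.PosSemidef) : hA.sqrt.PosSemidef := by
  rw [hA.sqrt_eq_cfc, ← nonneg_iff_posSemidef]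
  exact cfc_nonneg fun x _ => Real.sqrt_nonneg x

lemma PosSemidef.sqrt_mul_self (hA : A.PosSemidef) : hA.sqrt * hA.sqrt = A := by
  rw [hA.sqrt_eq_cfc, cfc_mul_cfc]
  conv_rhs => rw [← cfc_id' ℝ A hA.1.isSelfAdjoint]
  refine cfc_congr fun x hx => ?_
  obtain ⟨i, rfl⟩ := hA.1.spectrum_real_eq_range_eigenvalues ▸ hx
  exact Real.mul_self_sqrt (hA.eigenvalues_nonneg i)

end FunctionalCalculus

section TraceInequalities

lemma re_trace_mul_nonneg {X Y : Matrix n n 𝕜} (hX : X.PosSemidef) (hY : Y.PosSemidef) :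
    0 ≤ RCLike.re (X * Y).trace := by
  rw [← hY.sqrt_mul_self, ← mul_assoc, trace_mul_comm, ← mul_assoc]
  have h := (hX.mul_mul_conjTranspose_same hY.sqrt).trace_nonneg
  rw [hY.posSemidef_sqrt.1.eq] at h
  exact (RCLike.nonneg_iff.mp h).1

lemma re_trace_mul_le_re_trace {E Z : Matrix n n 𝕜} (hE : E ≤ 1) (hZ : Z.PosSemidef) :
    RCLike.re (E * Z).trace ≤ RCLike.re Z.trace := by
  have h := re_trace_mul_nonneg hE hZ
  rw [sub_mul, one_mul, trace_sub, map_sub] at h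
  linarith

lemma re_trace_conjTranspose_mul_le (X Y : Matrix n n 𝕜) :
    RCLike.re (Xᴴ * Y).trace ≤
      √(RCLike.re (Xᴴ * X).trace) * √(RCLike.re (Yᴴ * Y).trace) := by
  let _ := toMatrixSeminormedAddCommGroup (1 : Matrix n n 𝕜) .one
  let _ := toMatrixInnerProductSpace (1 : Matrix n n 𝕜) .one
  have h := re_inner_le_norm (𝕜 := 𝕜) X Y
  rw [norm_eq_sqrt_re_inner (𝕜 := 𝕜), norm_eq_sqrt_re_inner (𝕜 := 𝕜)] at h
  change RCLike.re (Y * 1 * Xᴴ).trace ≤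
    √(RCLike.re (X * 1 * Xᴴ).trace) * √(RCLike.re (Y * 1 * Yᴴ).trace) at h
  simpa only [mul_one, trace_mul_comm _ Xᴴ, trace_mul_comm Y] using h

/-- `W = M P⁺`, where `P⁺ = cfc (·⁻¹) P` is the Moore–Penrose inverse of `P`; `M` vanishes on
`ker P` because `Mᴴ M = P²`. -/
lemma exists_mul_eq_of_conjTranspose_mul_self_eq {M P : Matrix n n 𝕜} (hP : P.IsHermitian)
    (hMP : Mᴴ * M = P * P) : ∃ W : Matrix n n 𝕜, W * P = M ∧ Wᴴ * M = P ∧ Wᴴ * W ≤ 1 := by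
  set Q := cfc (·⁻¹ : ℝ → ℝ) P with hQdef
  have hQ : Qᴴ = Q := (cfc_predicate _ P : IsSelfAdjoint Q)
  have hPid := cfc_id' ℝ P hP.isSelfAdjoint
  have hP1 := cfc_one ℝ P hP.isSelfAdjoint
  refine ⟨M * Q, ?_, ?_, ?_⟩
  · have hker : (1 - P * Q) * (P * P) * (1 - Q * P) = 0 := by
      rw [← hPid, ← hP1, hQdef]
      simp only [cfc_mul_cfc, cfc_sub_cfc]
      refine (cfc_congr fun x _ => ?_).trans (cfc_zero ℝ P)
      by_cases hx : x = 0 <;> simp [hx]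
    have h : (M - M * Q * P)ᴴ * (M - M * Q * P) = (1 - P * Q) * (Mᴴ * M) * (1 - Q * P) := by
      simp only [conjTranspose_sub, conjTranspose_mul, hQ, hP.eq]
      noncomm_ring
    rw [hMP, hker, conjTranspose_mul_self_eq_zero, sub_eq_zero] at h
    exact h.symm
  · rw [conjTranspose_mul, hQ, mul_assoc, hMP, ← hPid, hQdef, cfc_mul_cfc, cfc_mul_cfc]
    exact cfc_congr fun x _ => by rw [← mul_assoc, inv_mul_mul_self]
  · rw [conjTranspose_mul, hQ, mul_assoc, ← mul_assoc Mᴴ, hMP, ← hPid, hQdef]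
    simp only [cfc_mul_cfc]
    refine cfc_le_one _ _ fun x _ => ?_
    by_cases hx : x = 0 <;> simp [hx]

lemma re_trace_le_of_conjTranspose_mul_self_eq {M P : Matrix n n 𝕜} (hP : P.PosSemidef)
    (hMP : Mᴴ * M = P * P) : RCLike.re M.trace ≤ RCLike.re P.trace := by
  obtain ⟨W, hWP, -, hW⟩ := exists_mul_eq_of_conjTranspose_mul_self_eq hP.1 hMP
  set s := hP.sqrt
  have hs : sᴴ = s := hP.posSemidef_sqrt.1
  have hss : s * s = P := hP.sqrt_mul_self
  have hM : M.trace = (sᴴ * (W * s)).trace := by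
    rw [← hWP, ← hss, hs, ← mul_assoc, trace_mul_comm]
  have hWs : RCLike.re ((W * s)ᴴ * (W * s)).trace ≤ RCLike.re P.trace := by
    rw [conjTranspose_mul, hs, mul_assoc, trace_mul_comm, mul_assoc, mul_assoc, hss,
      ← mul_assoc]
    exact re_trace_mul_le_re_trace hW hP
  calc RCLike.re M.trace
      ≤ √(RCLike.re (sᴴ * s).trace) * √(RCLike.re ((W * s)ᴴ * (W * s)).trace) := by
        rw [hM]; exact re_trace_conjTranspose_mul_le _ _
    _ ≤ √(RCLike.re P.trace) * √(RCLike.re P.trace) := by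
        rw [hs, hss]; gcongr
    _ = RCLike.re P.trace := Real.mul_self_sqrt (RCLike.nonneg_iff.mp hP.trace_nonneg).1

lemma re_trace_conjTranspose_mul_mul_mul_le {A B R W : Matrix n n 𝕜} (hA : A.IsHermitian)
    (hB : B.IsHermitian) (hR : R.IsHermitian) (hRR : R * R = R) (hW : Wᴴ * W ≤ 1) :
    RCLike.re (Wᴴ * A * R * B).trace ≤
      √(RCLike.re (A * A * R).trace) * √(RCLike.re (B * B * R).trace) := by
  have hXY : (Wᴴ * A * R * B).trace = ((W * B * R)ᴴ * (A * R)).trace :=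
    calc (Wᴴ * A * R * B).trace = (B * Wᴴ * A * (R * R)).trace := by
          rw [hRR, trace_mul_comm, ← mul_assoc, ← mul_assoc]
      _ = (R * (B * Wᴴ * A * R)).trace := by rw [trace_mul_comm R, ← mul_assoc]
      _ = ((W * B * R)ᴴ * (A * R)).trace := by
          rw [conjTranspose_mul, conjTranspose_mul, hR.eq, hB.eq]; congr 1; noncomm_ring
  have hX : RCLike.re ((W * B * R)ᴴ * (W * B * R)).trace ≤ RCLike.re (B * B * R).trace := by
    have h : ((W * B * R)ᴴ * (W * B * R)).trace = (Wᴴ * W * (B * R * B)).trace :=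
      calc ((W * B * R)ᴴ * (W * B * R)).trace = (R * (B * Wᴴ * W * B * R)).trace := by
            simp only [conjTranspose_mul, hR.eq, hB.eq]; congr 1; noncomm_ring
        _ = (B * (Wᴴ * W * B * (R * R))).trace := by
            rw [trace_mul_comm]; congr 1; noncomm_ring
        _ = (Wᴴ * W * (B * R * B)).trace := by
            rw [hRR, trace_mul_comm]; congr 1; noncomm_ring
    have hBRB : (B * R * B).PosSemidef := by
      simpa [hR.eq, hB.eq, ← mul_assoc, mul_assoc B R R, hRR] using
        posSemidef_conjTranspose_mul_self (R * B)
    rw [h, ← trace_mul_cycle B R B]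
    exact re_trace_mul_le_re_trace hW hBRB
  have hY : ((A * R)ᴴ * (A * R)).trace = (A * A * R).trace := by
    rw [conjTranspose_mul, hR.eq, hA.eq, trace_mul_comm, ← mul_assoc, mul_assoc A R, hRR,
      trace_mul_cycle]
  calc RCLike.re (Wᴴ * A * R * B).trace
      ≤ √(RCLike.re ((W * B * R)ᴴ * (W * B * R)).trace) *
          √(RCLike.re ((A * R)ᴴ * (A * R)).trace) := by
        rw [hXY]; exact re_trace_conjTranspose_mul_le _ _
    _ ≤ √(RCLike.re (A * A * R).trace) * √(RCLike.re (B * B * R).trace) := by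
        rw [hY, mul_comm]; gcongr

end TraceInequalities

section PositivePart

noncomputable def posPartProj (X : Matrix n n 𝕜) : Matrix n n 𝕜 :=
  cfc (fun x : ℝ => if 0 ≤ x then 1 else 0) X

lemma isHermitian_posPartProj (X : Matrix n n 𝕜) : (posPartProj X).IsHermitian :=
  cfc_predicate _ X

lemma posPartProj_mul_self (X : Matrix n n 𝕜) : posPartProj X * posPartProj X = posPartProj X := by
  rw [posPartProj, cfc_mul_cfc]
  exact cfc_congr fun x _ => by split_ifs <;> simp

lemma posPartProj_nonneg (X : Matrix n n 𝕜) : 0 ≤ posPartProj X :=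
  cfc_nonneg fun x _ => by split_ifs <;> simp

lemma posPartProj_le_one (X : Matrix n n 𝕜) : posPartProj X ≤ 1 :=
  cfc_le_one _ _ fun x _ => by split_ifs <;> simp

variable {X : Matrix n n 𝕜}

lemma posPartProj_mul (hX : X.IsHermitian) :
    posPartProj X * X = cfc (fun x : ℝ => max x 0) X := by
  rw [posPartProj, cfc_mul_self_eq hX]
  exact cfc_congr fun x _ => by split_ifs with h <;> simp [h, le_of_not_ge]

lemma mul_posPartProj (hX : X.IsHermitian) :
    X * posPartProj X = cfc (fun x : ℝ => max x 0) X := by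
  rw [posPartProj, self_mul_cfc_eq hX]
  exact cfc_congr fun x _ => by split_ifs with h <;> simp [h, le_of_not_ge]

lemma posSemidef_posPartProj_mul (hX : X.IsHermitian) : (posPartProj X * X).PosSemidef := by
  rw [posPartProj_mul hX, ← nonneg_iff_posSemidef]
  exact cfc_nonneg fun x _ => le_max_right x 0

lemma posSemidef_posPartProj_mul_sub (hX : X.IsHermitian) :
    (posPartProj X * X - X).PosSemidef := by
  rw [posPartProj_mul hX, cfc_sub_self_eq hX, ← nonneg_iff_posSemidef]
  exact cfc_nonneg fun x _ => sub_nonneg.mpr (le_max_left x 0)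

lemma two_mul_re_trace_posPartProj_mul_sub (hX : X.IsHermitian) :
    2 * RCLike.re (posPartProj X * X).trace - RCLike.re X.trace = ∑ i, |hX.eigenvalues i| := by
  rw [posPartProj_mul hX, hX.re_trace_cfc, hX.trace_eq_sum_eigenvalues, map_sum,
    Finset.mul_sum, ← Finset.sum_sub_distrib]
  refine Finset.sum_congr rfl fun i _ => ?_
  rw [RCLike.ofReal_re]
  rcases le_total 0 (hX.eigenvalues i) with h | h
  · rw [max_eq_left h, abs_of_nonneg h]; ring
  · rw [max_eq_right h, abs_of_nonpos h]; ring

lemma two_mul_re_trace_mul_sub_le (hX : X.IsHermitian) {E : Matrix n n 𝕜} (hE0 : 0 ≤ E)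
    (hE1 : E ≤ 1) : 2 * RCLike.re (E * X).trace - RCLike.re X.trace ≤ ∑ i, |hX.eigenvalues i| := by
  have hpos := re_trace_mul_le_re_trace hE1 (posSemidef_posPartProj_mul hX)
  have hneg := re_trace_mul_nonneg (nonneg_iff_posSemidef.mp hE0)
    (posSemidef_posPartProj_mul_sub hX)
  rw [mul_sub, trace_sub, map_sub] at hneg
  linarith [two_mul_re_trace_posPartProj_mul_sub hX]

end PositivePart

lemma re_trace_sub_mul_sub_le {A B X : Matrix n n 𝕜} (hA : A.PosSemidef) (hB : B.PosSemidef)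
    (hX : X.IsHermitian) (hXAB : X = A * A - B * B) :
    RCLike.re ((A - B) * (A - B)).trace ≤ ∑ i, |hX.eigenvalues i| := by
  set C := A - B with hCdef
  have hC : C.IsHermitian := hA.1.sub hB.1
  set R := posPartProj C
  have hRC : R * C = C * R := (posPartProj_mul hC).trans (mul_posPartProj hC).symm
  have hRX : 2 * (R * X).trace = 2 * (R * C * (A + B)).trace := by
    have h2X : X + X = C * (A + B) + (A + B) * C := by rw [hXAB, hCdef]; noncomm_ring
    have hcyc : (R * ((A + B) * C)).trace = (R * C * (A + B)).trace := by
      rw [← mul_assoc, trace_mul_comm, ← mul_assoc, ← hRC]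
    rw [two_mul, two_mul, ← trace_add, ← mul_add, h2X, mul_add, trace_add, hcyc, mul_assoc]
  have hXC : X.trace = (C * (A + B)).trace := by
    rw [hXAB, hCdef]
    simp only [sub_mul, mul_add, trace_add, trace_sub]
    rw [trace_mul_comm A B]
    ring
  have hCC : C * C = C * A - C * B := mul_sub C A B
  have key : 2 * (R * X).trace - X.trace - (C * C).trace
      = 2 * (R * C * B).trace + 2 * ((R * C - C) * A).trace := by
    rw [hRX, hXC, hCC]
    simp only [mul_add, sub_mul, trace_add, trace_sub]
    ring
  have key_re := congrArg RCLike.re key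
  simp only [map_sub, map_add, RCLike.ofNat_mul_re] at key_re
  have hCB := re_trace_mul_nonneg (posSemidef_posPartProj_mul hC) hB
  have hCA := re_trace_mul_nonneg (posSemidef_posPartProj_mul_sub hC) hA
  linarith [two_mul_re_trace_mul_sub_le hX (posPartProj_nonneg C) (posPartProj_le_one C)]

lemma re_trace_le_add_of_conjTranspose_mul_self_eq {A B P R : Matrix n n 𝕜}
    (hA : A.IsHermitian) (hB : B.IsHermitian) (hP : P.IsHermitian)
    (hABP : (A * B)ᴴ * (A * B) = P * P) (hR : R.IsHermitian) (hRR : R * R = R) :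
    RCLike.re P.trace ≤
      √(RCLike.re (A * A * R).trace) * √(RCLike.re (B * B * R).trace) +
        √(RCLike.re (A * A * (1 - R)).trace) * √(RCLike.re (B * B * (1 - R)).trace) := by
  obtain ⟨W, -, hWP, hW⟩ := exists_mul_eq_of_conjTranspose_mul_self_eq hP hABP
  have hP' : P = Wᴴ * A * R * B + Wᴴ * A * (1 - R) * B := by rw [← hWP]; noncomm_ring
  have hRR' : (1 - R) * (1 - R) = 1 - R := by
    simp only [sub_mul, mul_sub, one_mul, mul_one, hRR, sub_self, sub_zero]
  rw [hP', trace_add, map_add]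
  exact add_le_add (re_trace_conjTranspose_mul_mul_mul_le hA hB hR hRR hW)
    (re_trace_conjTranspose_mul_mul_mul_le hA hB (isHermitian_one.sub hR) hRR' hW)

theorem one_sub_re_trace_le_half_sum_abs_eigenvalues {ρ σ A B P : Matrix n n 𝕜}
    (hA : A.PosSemidef) (hB : B.PosSemidef) (hP : P.PosSemidef) (hAρ : A * A = ρ)
    (hBσ : B * B = σ) (hρ1 : ρ.trace = 1) (hσ1 : σ.trace = 1)
    (hABP : (A * B)ᴴ * (A * B) = P * P) (hH : (ρ - σ).IsHermitian) :
    1 - RCLike.re P.trace ≤ 1 / 2 * ∑ i, |hH.eigenvalues i| := by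
  have hPS := re_trace_sub_mul_sub_le hA hB hH (by rw [hAρ, hBσ])
  have hAB := re_trace_le_of_conjTranspose_mul_self_eq hP hABP
  have hsq : ((A - B) * (A - B)).trace = 2 - 2 * (A * B).trace := by
    simp only [sub_mul, mul_sub, trace_sub, hAρ, hBσ, hρ1, hσ1, trace_mul_comm B A]
    ring
  rw [hsq, map_sub, RCLike.ofNat_mul_re, RCLike.ofNat_re] at hPS
  linarith

theorem half_sum_abs_eigenvalues_le_sqrt {ρ σ A B P : Matrix n n 𝕜} (hρ : ρ.PosSemidef)
    (hσ : σ.PosSemidef) (hA : A.IsHermitian) (hB : B.IsHermitian) (hP : P.PosSemidef)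
    (hAρ : A * A = ρ) (hBσ : B * B = σ) (hρ1 : ρ.trace = 1) (hσ1 : σ.trace = 1)
    (hABP : (A * B)ᴴ * (A * B) = P * P) (hH : (ρ - σ).IsHermitian) :
    1 / 2 * ∑ i, |hH.eigenvalues i| ≤ √(1 - RCLike.re P.trace ^ 2) := by
  set R := posPartProj (ρ - σ)
  have hR0 : R.PosSemidef := nonneg_iff_posSemidef.mp (posPartProj_nonneg _)
  have hR1 : (1 - R).PosSemidef := posPartProj_le_one _
  set p := RCLike.re (ρ * R).trace
  set q := RCLike.re (σ * R).trace
  have hp : RCLike.re (ρ * (1 - R)).trace = 1 - p := by simp [mul_sub, hρ1, p]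
  have hq : RCLike.re (σ * (1 - R)).trace = 1 - q := by simp [mul_sub, hσ1, q]
  have hp0 : 0 ≤ p := re_trace_mul_nonneg hρ hR0
  have hq0 : 0 ≤ q := re_trace_mul_nonneg hσ hR0
  have hp1 : 0 ≤ 1 - p := hp ▸ re_trace_mul_nonneg hρ hR1
  have hq1 : 0 ≤ 1 - q := hq ▸ re_trace_mul_nonneg hσ hR1
  have hsum : ∑ i, |hH.eigenvalues i| = 2 * (p - q) := by
    rw [← two_mul_re_trace_posPartProj_mul_sub hH, mul_sub, trace_sub, trace_sub, hρ1, hσ1,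
      trace_mul_comm R ρ, trace_mul_comm R σ]
    simp [p, q]
  have hF := re_trace_le_add_of_conjTranspose_mul_self_eq hA hB hP.1 hABP
    (isHermitian_posPartProj (ρ - σ)) (posPartProj_mul_self (ρ - σ))
  rw [hAρ, hBσ, hp, hq] at hF
  have hF0 : 0 ≤ RCLike.re P.trace := (RCLike.nonneg_iff.mp hP.trace_nonneg).1
  have hFsq : RCLike.re P.trace ^ 2 ≤ 1 - (p - q) ^ 2 := (pow_le_pow_left₀ hF0 hF 2).trans
    (sqrt_mul_sqrt_add_sqrt_mul_sqrt_sq_le hp0 (by linarith) hq0 (by linarith))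
  have hpq : 0 ≤ p - q := by
    linarith [Finset.sum_nonneg fun i (_ : i ∈ Finset.univ) => abs_nonneg (hH.eigenvalues i)]
  rw [hsum, Real.le_sqrt (by linarith) (by nlinarith)]
  nlinarith

end Matrix

theorem stmt15_general (d : ℕ) (ρ σ : Matrix (Fin d) (Fin d) ℂ)
    (hρ : ρ.PosSemidef) (hσ : σ.PosSemidef)
    (hρ1 : ρ.trace = 1) (hσ1 : σ.trace = 1)
    (hF : (hσ.sqrt * ρ * hσ.sqrt).PosSemidef)
    (hH : (ρ - σ).IsHermitian) :
    1 - (Matrix.trace hF.sqrt).re ≤ (1 / 2) * ∑ j, |hH.eigenvalues j| ∧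
      (1 / 2) * ∑ j, |hH.eigenvalues j| ≤
        Real.sqrt (1 - (Matrix.trace hF.sqrt).re ^ 2) := by
  have hABP : (hρ.sqrt * hσ.sqrt)ᴴ * (hρ.sqrt * hσ.sqrt) = hF.sqrt * hF.sqrt := by
    rw [hF.sqrt_mul_self, conjTranspose_mul, hρ.posSemidef_sqrt.1.eq, hσ.posSemidef_sqrt.1.eq,
      mul_assoc, ← mul_assoc hρ.sqrt, hρ.sqrt_mul_self, ← mul_assoc]
  exact ⟨one_sub_re_trace_le_half_sum_abs_eigenvalues hρ.posSemidef_sqrt hσ.posSemidef_sqrt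
      hF.posSemidef_sqrt hρ.sqrt_mul_self hσ.sqrt_mul_self hρ1 hσ1 hABP hH,
    half_sum_abs_eigenvalues_le_sqrt hρ hσ hρ.posSemidef_sqrt.1 hσ.posSemidef_sqrt.1
      hF.posSemidef_sqrt hρ.sqrt_mul_self hσ.sqrt_mul_self hρ1 hσ1 hABP hH⟩

/-- Fuchs–van de Graaf inequalities: for density matrices `ρ, σ` with fidelity
`F(ρ,σ) = Tr √(√σ ρ √σ)`, we have `1 − F ≤ ½‖ρ − σ‖₁ ≤ √(1 − F²)`. -/
theorem stmt15 (d : ℕ) (hd : 1 ≤ d) (ρ σ : Matrix (Fin d) (Fin d) ℂ)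
    (hρ : ρ.PosSemidef) (hσ : σ.PosSemidef)
    (hρ1 : ρ.trace = 1) (hσ1 : σ.trace = 1)
    (hF : (hσ.sqrt * ρ * hσ.sqrt).PosSemidef)
    (hH : (ρ - σ).IsHermitian) :
    1 - (Matrix.trace hF.sqrt).re ≤ (1 / 2) * ∑ j, |hH.eigenvalues j| ∧
      (1 / 2) * ∑ j, |hH.eigenvalues j| ≤
        Real.sqrt (1 - (Matrix.trace hF.sqrt).re ^ 2) :=
  stmt15_general d ρ σ hρ hσ hρ1 hσ1 hF hH
end

section
/- (Classical correlated sampling, coupling form.) There exists a universal constant K > 0 such that for every finite nonempty set 𝒰 there exist a probability space (S, ν) and, for every probability distribution P on 𝒰, a random variable f_P : S → 𝒰 whose distribution under ν is exactly P, with the following property: for all probability distributions P and Q on 𝒰, ν({ω ∈ S : f_P(ω) ≠ f_Q(ω)}) ≤ K · ‖P − Q‖, where ‖P − Q‖ = (1/2) Σ_{u∈𝒰} |P(u) − Q(u)| is the total variation distance. -/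
/-!
Rejection sampling with shared randomness. The common randomness is an i.i.d. sequence of rounds
`(u, t)` with `u` uniform on `𝒰` and `t` uniform on `(0, 1]`, and the sampler for `P` outputs the
label `u` of the first round in `A_P = {(u, t) | t ≤ P u}`. The first round in a set `A` lands in
`B ⊆ A` with probability `ρ B / ρ A` (a geometric series); since `ρ (A_P ∩ {u} × ℝ) = P u / |𝒰|`
and `ρ A_P = 1 / |𝒰|`, the output has law `P`. Two samplers can only disagree when the first round
in `A_P ∪ A_Q` lies in `A_P ∆ A_Q`, which has probability at most
`ρ (A_P ∆ A_Q) / ρ A_P ≤ ∑ u, |P u - Q u| = 2 ‖P - Q‖`.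
-/

open MeasureTheory Set
open scoped ENNReal symmDiff

namespace CorrelatedSampling

section RejectionSampling

variable {R α : Type*}

def hitFirstAt (A B : Set R) (i : ℕ) : Set (ℕ → R) := {ω | ω i ∈ B ∧ ∀ j < i, ω j ∉ A}

def firstHitIn (A B : Set R) : Set (ℕ → R) := ⋃ i, hitFirstAt A B i

open Classical in
/-- `a₀` is only returned on the null event that no round is accepted. -/
noncomputable def rejectionSample (A : Set R) (g : R → α) (a₀ : α) (ω : ℕ → R) : α :=
  if h : ∃ i, ω i ∈ A then g (ω (Nat.find h)) else a₀

lemma rejectionSample_eq_of_hitFirstAt {A : Set R} {g : R → α} {a₀ : α} {ω : ℕ → R} {i : ℕ}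
    (hω : ω ∈ hitFirstAt A A i) : rejectionSample A g a₀ ω = g (ω i) := by
  classical
  have h : ∃ i, ω i ∈ A := ⟨i, hω.1⟩
  have hfind : Nat.find h = i :=
    le_antisymm (Nat.find_min' h hω.1) (not_lt.1 fun hlt => hω.2 _ hlt (Nat.find_spec h))
  rw [rejectionSample, dif_pos h, hfind]

lemma mem_hitFirstAt_find {A : Set R} {ω : ℕ → R} [DecidablePred fun i => ω i ∈ A]
    (h : ∃ i, ω i ∈ A) : ω ∈ hitFirstAt A A (Nat.find h) :=
  ⟨Nat.find_spec h, fun _ => Nat.find_min h⟩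

lemma pairwise_disjoint_hitFirstAt {A B : Set R} (hBA : B ⊆ A) :
    Pairwise (Function.onFun Disjoint (hitFirstAt A B)) := by
  intro i j hij
  refine Set.disjoint_left.2 fun ω hi hj => ?_
  rcases hij.lt_or_gt with h | h
  · exact hj.2 i h (hBA hi.1)
  · exact hi.2 j h (hBA hj.1)

lemma hitFirstAt_eq_pi (A B : Set R) (i : ℕ) :
    hitFirstAt A B i = Set.pi (Finset.range (i + 1)) fun j => if j < i then Aᶜ else B := by
  ext ω
  simp only [hitFirstAt, mem_ofPred_eq, mem_pi, Finset.coe_range, mem_Iio]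
  constructor
  · rintro ⟨hi, hlt⟩ j hj
    split_ifs with h
    · exact hlt j h
    · rwa [show j = i by omega]
  · intro h
    refine ⟨by simpa using h i (by omega), fun j hj => by simpa [hj] using h j (by omega)⟩

variable [MeasurableSpace R] (ρ : Measure R) [IsProbabilityMeasure ρ]

lemma infinitePi_hitFirstAt {A B : Set R} (hA : MeasurableSet A) (hB : MeasurableSet B) (i : ℕ) :
    Measure.infinitePi (fun _ => ρ) (hitFirstAt A B i) = ρ Aᶜ ^ i * ρ B := by
  rw [hitFirstAt_eq_pi,
    Measure.infinitePi_pi (fun _ => ρ) (fun j _ => by split_ifs <;> measurability),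
    Finset.prod_range_succ, if_neg (lt_irrefl i),
    Finset.prod_congr rfl fun j hj => by rw [if_pos (Finset.mem_range.1 hj)], Finset.prod_const,
    Finset.card_range]

lemma measurableSet_hitFirstAt {A B : Set R} (hA : MeasurableSet A) (hB : MeasurableSet B)
    (i : ℕ) : MeasurableSet (hitFirstAt A B i) := by
  rw [hitFirstAt_eq_pi]
  exact .pi (Finset.range _).countable_toSet fun j _ => by split_ifs <;> measurability

lemma measurableSet_firstHitIn {A B : Set R} (hA : MeasurableSet A) (hB : MeasurableSet B) :
    MeasurableSet (firstHitIn A B) :=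
  .iUnion (measurableSet_hitFirstAt hA hB)

lemma infinitePi_firstHitIn {A B : Set R} (hA : MeasurableSet A) (hB : MeasurableSet B)
    (hBA : B ⊆ A) : Measure.infinitePi (fun _ => ρ) (firstHitIn A B) = ρ B / ρ A := by
  rw [firstHitIn, measure_iUnion (pairwise_disjoint_hitFirstAt hBA)
      (measurableSet_hitFirstAt hA hB), tsum_congr (infinitePi_hitFirstAt ρ hA hB),
    ENNReal.tsum_mul_right, ENNReal.tsum_geometric, prob_compl_eq_one_sub hA,
    ENNReal.sub_sub_cancel ENNReal.one_ne_top prob_le_one, div_eq_mul_inv, mul_comm]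

lemma infinitePi_forall_notMem {A : Set R} (hA : MeasurableSet A) (h : ρ A ≠ 0) :
    Measure.infinitePi (fun _ => ρ) {ω : ℕ → R | ∀ i, ω i ∉ A} = 0 := by
  classical
  have hcompl : {ω : ℕ → R | ∀ i, ω i ∉ A} = (firstHitIn A A)ᶜ := by
    ext ω
    simp only [mem_ofPred_eq, mem_compl_iff, firstHitIn, mem_iUnion, not_exists]
    refine ⟨fun hω i hi => hω i hi.1, fun hω i hi => ?_⟩
    have hex : ∃ i, ω i ∈ A := ⟨i, hi⟩
    exact hω _ (mem_hitFirstAt_find hex)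
  rw [hcompl, prob_compl_eq_zero_iff (measurableSet_firstHitIn hA hA),
    infinitePi_firstHitIn ρ hA hA subset_rfl, ENNReal.div_self h (measure_ne_top ρ A)]

lemma infinitePi_rejectionSample_preimage {A : Set R} {g : R → α} (a₀ a : α)
    (hA : MeasurableSet A) (hAa : MeasurableSet (A ∩ g ⁻¹' {a})) (h : ρ A ≠ 0) :
    Measure.infinitePi (fun _ => ρ) (rejectionSample A g a₀ ⁻¹' {a}) =
      ρ (A ∩ g ⁻¹' {a}) / ρ A := by
  classical
  have hlower : firstHitIn A (A ∩ g ⁻¹' {a}) ⊆ rejectionSample A g a₀ ⁻¹' {a} := by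
    simp only [firstHitIn, iUnion_subset_iff]
    intro i ω hω
    rw [mem_preimage, rejectionSample_eq_of_hitFirstAt ⟨hω.1.1, hω.2⟩]
    exact hω.1.2
  have hupper : rejectionSample A g a₀ ⁻¹' {a} ⊆
      firstHitIn A (A ∩ g ⁻¹' {a}) ∪ {ω | ∀ i, ω i ∉ A} := by
    intro ω hω
    by_cases hex : ∃ i, ω i ∈ A
    · have hfirst := mem_hitFirstAt_find hex
      rw [mem_preimage, rejectionSample_eq_of_hitFirstAt hfirst] at hω
      exact Or.inl (mem_iUnion.2 ⟨_, ⟨hfirst.1, hω⟩, hfirst.2⟩)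
    · exact Or.inr (not_exists.1 hex)
  rw [← infinitePi_firstHitIn ρ hA hAa inter_subset_left]
  refine le_antisymm ?_ (measure_mono hlower)
  calc _ ≤ _ := measure_mono hupper
    _ ≤ _ := measure_union_le _ _
    _ = _ := by rw [infinitePi_forall_notMem ρ hA h, add_zero]

lemma infinitePi_rejectionSample_ne_le {A A' : Set R} (g : R → α) (a₀ : α)
    (hA : MeasurableSet A) (hA' : MeasurableSet A') (h : ρ (A ∪ A') ≠ 0) :
    Measure.infinitePi (fun _ => ρ)
        {ω | rejectionSample A g a₀ ω ≠ rejectionSample A' g a₀ ω} ≤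
      ρ (A ∆ A') / ρ (A ∪ A') := by
  classical
  have hsub : {ω | rejectionSample A g a₀ ω ≠ rejectionSample A' g a₀ ω} ⊆
      firstHitIn (A ∪ A') (A ∆ A') ∪ {ω | ∀ i, ω i ∉ A ∪ A'} := by
    intro ω hω
    by_cases hex : ∃ i, ω i ∈ A ∪ A'
    · obtain ⟨hi, hlt⟩ := mem_hitFirstAt_find hex
      refine Or.inl (mem_iUnion.2 ⟨_, ?_, hlt⟩)
      by_contra hnot
      have hboth : ω (Nat.find hex) ∈ A ∩ A' := by
        simp only [mem_symmDiff, mem_union] at hi hnot ⊢; tauto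
      apply hω
      rw [rejectionSample_eq_of_hitFirstAt ⟨hboth.1, fun j hj => (hlt j hj <| .inl ·)⟩,
        rejectionSample_eq_of_hitFirstAt ⟨hboth.2, fun j hj => (hlt j hj <| .inr ·)⟩]
    · exact Or.inr (not_exists.1 hex)
  calc _ ≤ _ := measure_mono hsub
    _ ≤ _ := measure_union_le _ _
    _ = _ := by
      rw [infinitePi_forall_notMem ρ (hA.union hA') h, add_zero,
        infinitePi_firstHitIn ρ (hA.union hA') (hA.symmDiff hA') symmDiff_le_sup]

end RejectionSampling

lemma _root_.Set.Iic_symmDiff_Iic {β : Type*} [LinearOrder β] (a b : β) :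
    Iic a ∆ Iic b = Ioc (min a b) (max a b) := by
  ext x
  simp only [mem_symmDiff, mem_Iic, mem_Ioc, min_lt_iff, le_max_iff]
  grind

section Fiberwise

variable {U β : Type*} [Fintype U] [MeasurableSpace U] [MeasurableSingletonClass U]
  [MeasurableSpace β]

lemma measurableSet_setOf_snd_mem {T : U → Set β} (hT : ∀ u, MeasurableSet (T u)) :
    MeasurableSet {x : U × β | x.2 ∈ T x.1} := by
  have : {x : U × β | x.2 ∈ T x.1} = ⋃ u, {u} ×ˢ T u := by ext ⟨u, t⟩; simp
  rw [this]
  exact .iUnion fun u => (measurableSet_singleton u).prod (hT u)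

lemma prod_setOf_snd_mem (π : Measure U) (μ : Measure β) [SFinite μ] {T : U → Set β}
    (hT : ∀ u, MeasurableSet (T u)) :
    π.prod μ {x : U × β | x.2 ∈ T x.1} = ∑ u, π {u} * μ (T u) := by
  rw [Measure.prod_apply (measurableSet_setOf_snd_mem hT), lintegral_fintype]
  exact Finset.sum_congr rfl fun u _ => mul_comm _ _

end Fiberwise

lemma le_one_of_sum_eq_one {U : Type*} [Fintype U] {P : U → ℝ} (hP : ∀ u, 0 ≤ P u)
    (hP1 : ∑ u, P u = 1) (u : U) : P u ≤ 1 :=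
  hP1 ▸ Finset.single_le_sum (fun v _ => hP v) (Finset.mem_univ u)

instance : IsProbabilityMeasure (volume.restrict (Ioc (0 : ℝ) 1)) :=
  ⟨by simp⟩

lemma volume_restrict_Ioc_Iic {p : ℝ} (hp : p ≤ 1) :
    volume.restrict (Ioc 0 1) (Iic p) = ENNReal.ofReal p := by
  rw [Measure.restrict_apply measurableSet_Iic, Iic_inter_Ioc_of_le hp, Real.volume_Ioc,
    sub_zero]

section Sampler

variable {U : Type*}

def belowGraph (P : U → ℝ) : Set (U × ℝ) := {x | x.2 ≤ P x.1}

lemma belowGraph_eq_setOf_snd_mem (P : U → ℝ) : belowGraph P = {x | x.2 ∈ Iic (P x.1)} := rfl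

lemma belowGraph_inter_fst_preimage (P : U → ℝ) (u : U) :
    belowGraph P ∩ Prod.fst ⁻¹' {u} = {u} ×ˢ Iic (P u) := by
  ext ⟨v, t⟩
  simp only [belowGraph, mem_inter_iff, mem_ofPred_eq, mem_preimage, mem_singleton_iff,
    mem_prod, mem_Iic]
  constructor
  · rintro ⟨h, rfl⟩; exact ⟨rfl, h⟩
  · rintro ⟨rfl, h⟩; exact ⟨h, rfl⟩

lemma belowGraph_symmDiff (P Q : U → ℝ) :
    belowGraph P ∆ belowGraph Q = {x | x.2 ∈ Iic (P x.1) ∆ Iic (Q x.1)} := rfl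

variable [Fintype U] [MeasurableSpace U] [MeasurableSingletonClass U]

lemma measurableSet_belowGraph (P : U → ℝ) : MeasurableSet (belowGraph P) :=
  measurableSet_setOf_snd_mem fun u => measurableSet_Iic (a := P u)

variable [Nonempty U]

variable (U) in
noncomputable def proposal : Measure (U × ℝ) :=
  (PMF.uniformOfFintype U).toMeasure.prod (volume.restrict (Ioc 0 1))

instance : IsProbabilityMeasure (proposal U) := by
  unfold proposal; infer_instance

noncomputable def correlatedSampler (P : U → ℝ) : (ℕ → U × ℝ) → U :=
  rejectionSample (belowGraph P) Prod.fst (Classical.arbitrary U)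

lemma proposal_singleton_prod (u : U) (T : Set ℝ) :
    proposal U ({u} ×ˢ T) = (Fintype.card U : ℝ≥0∞)⁻¹ * volume.restrict (Ioc 0 1) T := by
  rw [proposal, Measure.prod_prod, PMF.toMeasure_apply_singleton _ _ (measurableSet_singleton _),
    PMF.uniformOfFintype_apply]

lemma proposal_setOf_snd_mem {T : U → Set ℝ} (hT : ∀ u, MeasurableSet (T u)) :
    proposal U {x | x.2 ∈ T x.1} =
      (Fintype.card U : ℝ≥0∞)⁻¹ * ∑ u, volume.restrict (Ioc 0 1) (T u) := by
  rw [proposal, prod_setOf_snd_mem _ _ hT, Finset.mul_sum]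
  simp_rw [PMF.toMeasure_apply_singleton _ _ (measurableSet_singleton _),
    PMF.uniformOfFintype_apply]

lemma proposal_belowGraph {P : U → ℝ} (hP : ∀ u, 0 ≤ P u) (hP1 : ∑ u, P u = 1) :
    proposal U (belowGraph P) = (Fintype.card U : ℝ≥0∞)⁻¹ := by
  rw [belowGraph_eq_setOf_snd_mem, proposal_setOf_snd_mem fun u => measurableSet_Iic,
    Finset.sum_congr rfl fun u _ => volume_restrict_Ioc_Iic (le_one_of_sum_eq_one hP hP1 u),
    ← ENNReal.ofReal_sum_of_nonneg fun u _ => hP u, hP1, ENNReal.ofReal_one, mul_one]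

lemma proposal_belowGraph_symmDiff_le (P Q : U → ℝ) :
    proposal U (belowGraph P ∆ belowGraph Q) ≤
      (Fintype.card U : ℝ≥0∞)⁻¹ * ENNReal.ofReal (∑ u, |P u - Q u|) := by
  rw [belowGraph_symmDiff,
    proposal_setOf_snd_mem fun u => measurableSet_Iic.symmDiff measurableSet_Iic,
    ENNReal.ofReal_sum_of_nonneg fun u _ => abs_nonneg _]
  gcongr with u
  calc _ ≤ volume (Iic (P u) ∆ Iic (Q u)) := Measure.restrict_le_self _
    _ = _ := by rw [Iic_symmDiff_Iic, Real.volume_Ioc, max_sub_min_eq_abs, abs_sub_comm]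

theorem infinitePi_correlatedSampler_preimage {P : U → ℝ} (hP : ∀ u, 0 ≤ P u)
    (hP1 : ∑ u, P u = 1) (u : U) :
    Measure.infinitePi (fun _ => proposal U) (correlatedSampler P ⁻¹' {u}) =
      ENNReal.ofReal (P u) := by
  have hc : (Fintype.card U : ℝ≥0∞)⁻¹ ≠ 0 := ENNReal.inv_ne_zero.2 (ENNReal.natCast_ne_top _)
  have hslice := belowGraph_inter_fst_preimage P u
  rw [correlatedSampler, infinitePi_rejectionSample_preimage _ _ _ (measurableSet_belowGraph P)
      (hslice ▸ (measurableSet_singleton u).prod measurableSet_Iic)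
      (proposal_belowGraph hP hP1 ▸ hc),
    hslice, proposal_singleton_prod, volume_restrict_Ioc_Iic (le_one_of_sum_eq_one hP hP1 u),
    proposal_belowGraph hP hP1, mul_comm, ENNReal.mul_div_cancel_right hc
      (ENNReal.inv_ne_top.2 (Nat.cast_ne_zero.2 Fintype.card_ne_zero))]

theorem infinitePi_correlatedSampler_ne_le {P : U → ℝ} (hP : ∀ u, 0 ≤ P u)
    (hP1 : ∑ u, P u = 1) (Q : U → ℝ) :
    Measure.infinitePi (fun _ => proposal U)
        {ω | correlatedSampler P ω ≠ correlatedSampler Q ω} ≤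
      ENNReal.ofReal (∑ u, |P u - Q u|) := by
  have hc₀ : (Fintype.card U : ℝ≥0∞)⁻¹ ≠ 0 := ENNReal.inv_ne_zero.2 (ENNReal.natCast_ne_top _)
  have hc : (Fintype.card U : ℝ≥0∞)⁻¹ ≠ ⊤ :=
    ENNReal.inv_ne_top.2 (Nat.cast_ne_zero.2 Fintype.card_ne_zero)
  have hP_le : proposal U (belowGraph P) ≤ proposal U (belowGraph P ∪ belowGraph Q) :=
    measure_mono subset_union_left
  calc _ ≤ proposal U (belowGraph P ∆ belowGraph Q) /
        proposal U (belowGraph P ∪ belowGraph Q) :=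
        infinitePi_rejectionSample_ne_le _ _ _ (measurableSet_belowGraph P)
          (measurableSet_belowGraph Q)
          (ne_bot_of_le_ne_bot (proposal_belowGraph hP hP1 ▸ hc₀) hP_le)
    _ ≤ proposal U (belowGraph P ∆ belowGraph Q) / proposal U (belowGraph P) :=
        ENNReal.div_le_div_left hP_le _
    _ ≤ (Fintype.card U : ℝ≥0∞)⁻¹ * ENNReal.ofReal (∑ u, |P u - Q u|) /
          (Fintype.card U : ℝ≥0∞)⁻¹ := by
        rw [proposal_belowGraph hP hP1]
        gcongr
        exact proposal_belowGraph_symmDiff_le P Q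
    _ = _ := by rw [mul_comm, ENNReal.mul_div_cancel_right hc₀ hc]

end Sampler

end CorrelatedSampling

/-- Classical correlated sampling (coupling form): there is a universal constant `K > 0`
such that for every finite nonempty set `𝒰` there is a single probability space `(S, ν)`
and, for each distribution `P` on `𝒰`, a random variable `f P : S → 𝒰` distributed
exactly according to `P`, such that for any two distributions `P, Q`,
`ν(f P ≠ f Q) ≤ K · ‖P − Q‖`, where `‖·‖` is total variation distance. -/
theorem stmt16 :
    ∃ K : ℝ, 0 < K ∧
      ∀ (𝒰 : Type) [Fintype 𝒰] [Nonempty 𝒰],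
        ∃ (S : Type) (_ : MeasurableSpace S) (ν : Measure S),
          IsProbabilityMeasure ν ∧
          ∃ f : (𝒰 → ℝ) → S → 𝒰,
            (∀ P : 𝒰 → ℝ, (∀ u, 0 ≤ P u) → (∑ u, P u) = 1 →
              ∀ u, ν (f P ⁻¹' {u}) = ENNReal.ofReal (P u)) ∧
            (∀ P Q : 𝒰 → ℝ, (∀ u, 0 ≤ P u) → (∑ u, P u) = 1 →
              (∀ u, 0 ≤ Q u) → (∑ u, Q u) = 1 →
              ν {ω : S | f P ω ≠ f Q ω} ≤
                ENNReal.ofReal (K * ((1 / 2) * ∑ u, |P u - Q u|))) := by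
  refine ⟨2, two_pos, fun 𝒰 _ _ => ?_⟩
  let _ : MeasurableSpace 𝒰 := ⊤
  refine ⟨ℕ → 𝒰 × ℝ, inferInstance,
    Measure.infinitePi fun _ => CorrelatedSampling.proposal 𝒰, inferInstance,
    CorrelatedSampling.correlatedSampler,
    fun P hP hP1 u => CorrelatedSampling.infinitePi_correlatedSampler_preimage hP hP1 u,
    fun P Q hP hP1 _ _ => ?_⟩
  convert CorrelatedSampling.infinitePi_correlatedSampler_ne_le hP hP1 Q using 2
  ring
end

section
/- (Relative entropy chain rule for classical-quantum states.) Let Z be a finite set, let P and P' be probability distributions on Z with P(z) > 0 and P'(z) > 0 for all z, and for each z ∈ Z let ρ_z and ρ'_z be positive definite d×d density matrices. Define the block-diagonal matrices ρ = Σ_z P(z) · E_{zz} ⊗ ρ_z and ρ' = Σ_z P'(z) · E_{zz} ⊗ ρ'_z, where E_{zz} is the diagonal matrix unit indexed by z and ⊗ is the Kronecker product. Then S(ρ' ‖ ρ) = D(P' ‖ P) + Σ_z P'(z) · S(ρ'_z ‖ ρ_z), where for positive definite matrices A, B of the same trace-class setting, S(A ‖ B) = Re Tr(A (log A − log B)) with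 log the matrix logarithm (obtained by applying the real logarithm to the eigenvalues in a spectral decomposition), and D(P' ‖ P) = Σ_z P'(z) · log(P'(z)/P(z)) is the Kullback–Leibler divergence with the same (natural) logarithm. -/
open scoped ComplexOrder

open Matrix Kronecker

/-- The matrix logarithm of a Hermitian matrix via its spectral decomposition (applying the
real logarithm to the eigenvalues, with the junk convention `Real.log 0 = 0` on the kernel). -/
noncomputable def hermLog {n : Type*} [Fintype n] [DecidableEq n]
    {A : Matrix n n ℂ} (hA : A.IsHermitian) : Matrix n n ℂ :=
  (hA.eigenvectorUnitary : Matrix n n ℂ) *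
    Matrix.diagonal (fun j => (Real.log (hA.eigenvalues j) : ℂ)) *
    star (hA.eigenvectorUnitary : Matrix n n ℂ)

/-! Both states are images of tuples of matrices under the block-diagonal `ℝ`-algebra map
`x ↦ ⊕_z x z`. All spectra involved are finite, so on them `Real.log` agrees with one
interpolating polynomial, and polynomials commute with algebra homomorphisms; hence
`log ρ = ⊕_z (log P(z) • 1 + log ρ_z)`. The trace of `ρ' (log ρ' - log ρ)` then splits into
blocks, and `Tr ρ'_z = 1` turns the scalar part of each block into `P'(z) log (P'(z) / P(z))`. -/

open Polynomial

theorem Polynomial.exists_eval_eq_of_finite {F : Type*} [Field F] {s : Set F} (hs : s.Finite)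
    (f : F → F) : ∃ p : F[X], ∀ x ∈ s, p.eval x = f x := by
  classical
  refine ⟨Lagrange.interpolate hs.toFinset id f, fun x hx => ?_⟩
  exact Lagrange.eval_interpolate_at_node f (Set.injOn_id _) (hs.mem_toFinset.2 hx)

section cfc

variable {ι A B : Type*} [Fintype ι]
  [Ring A] [StarRing A] [TopologicalSpace A] [Algebra ℝ A]
  [ContinuousFunctionalCalculus ℝ A IsSelfAdjoint]
  [Ring B] [StarRing B] [TopologicalSpace B] [Algebra ℝ B]
  [ContinuousFunctionalCalculus ℝ B IsSelfAdjoint]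

theorem AlgHom.map_cfc_pi_of_finite_spectrum (φ : (ι → A) →ₐ[ℝ] B) (f : ℝ → ℝ) (x : ι → A)
    (hx : ∀ i, IsSelfAdjoint (x i)) (hφx : IsSelfAdjoint (φ x))
    (hfin : ∀ i, (spectrum ℝ (x i)).Finite) :
    cfc f (φ x) = φ (fun i => cfc f (x i)) := by
  obtain ⟨p, hp⟩ := Polynomial.exists_eval_eq_of_finite (Set.finite_iUnion hfin) f
  have hspec : spectrum ℝ (φ x) ⊆ ⋃ i, spectrum ℝ (x i) :=
    Pi.spectrum_eq (R := ℝ) x ▸ AlgHom.spectrum_apply_subset φ x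
  have hcfc : ∀ i, cfc f (x i) = aeval (x i) p := fun i => by
    rw [← cfc_polynomial p (x i) (hx i)]
    exact cfc_congr fun t ht => (hp t (Set.mem_iUnion_of_mem i ht)).symm
  have hcfcφ : cfc f (φ x) = aeval (φ x) p := by
    rw [← cfc_polynomial p (φ x) hφx]
    exact cfc_congr fun t ht => (hp t (hspec ht)).symm
  rw [hcfcφ, aeval_algHom_apply, funext hcfc, aeval_pi_apply]

theorem cfc_log_smul [ContinuousMap.UniqueHom ℝ A] {r : ℝ} (hr : r ≠ 0) (a : A)
    (ha : IsSelfAdjoint a) (ha₀ : ∀ t ∈ spectrum ℝ a, t ≠ 0) :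
    cfc Real.log (r • a) = algebraMap ℝ A (Real.log r) + cfc Real.log a := by
  calc cfc Real.log (r • a) = cfc (fun t => Real.log (r * t)) a := by
        rw [← cfc_smul_id (R := ℝ) r a, ← cfc_comp Real.log (r • ·) a]
        rfl
    _ = cfc (fun t => Real.log r + Real.log t) a :=
        cfc_congr fun t ht => Real.log_mul hr (ha₀ t ht)
    _ = _ := cfc_const_add _ _ _

end cfc

namespace Matrix

section blockDiag

variable {Z n R α : Type*} [Fintype Z] [DecidableEq Z] [Fintype n] [DecidableEq n]
  [CommSemiring R] [Semiring α] [Algebra R α]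

variable (R) in
/-- Unlike `Matrix.blockDiagonal`, the block index is the first coordinate. -/
def blockDiagAlgHom : (Z → Matrix n n α) →ₐ[R] Matrix (Z × n) (Z × n) α :=
  (compAlgEquiv Z n α R).toAlgHom.comp (diagonalAlgHom R)

theorem blockDiagAlgHom_apply (x : Z → Matrix n n α) (z w : Z) (i j : n) :
    blockDiagAlgHom R x (z, i) (w, j) = if z = w then x z i j else 0 := by
  rcases eq_or_ne z w with rfl | h
  · simp [blockDiagAlgHom]
  · simp [blockDiagAlgHom, h]

theorem trace_blockDiagAlgHom (x : Z → Matrix n n α) :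
    (blockDiagAlgHom R x).trace = ∑ z, (x z).trace := by
  simp [trace, Fintype.sum_prod_type, blockDiagAlgHom_apply]

theorem sum_single_kronecker_eq_blockDiagAlgHom (x : Z → Matrix n n α) :
    ∑ z, single z z (1 : α) ⊗ₖ x z = blockDiagAlgHom R x := by
  ext ⟨z, i⟩ ⟨w, j⟩
  rw [blockDiagAlgHom_apply, sum_apply]
  rcases eq_or_ne z w with rfl | h
  · simp [single_apply]
  · simp only [kroneckerMap_apply, single_apply, if_neg h]
    exact Finset.sum_eq_zero fun c _ => by
      simpa using fun hz hw => absurd (hz.symm.trans hw) h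

end blockDiag

end Matrix

theorem hermLog_eq_cfc {n : Type*} [Fintype n] [DecidableEq n] {A : Matrix n n ℂ}
    (hA : A.IsHermitian) : hermLog hA = cfc Real.log A := by
  rw [hA.cfc_eq, IsHermitian.cfc, Unitary.conjStarAlgAut_apply]
  rfl

theorem hermLog_blockDiagAlgHom_smul {Z n : Type*} [Fintype Z] [DecidableEq Z] [Fintype n]
    [DecidableEq n] {c : Z → ℝ} (hc : ∀ z, 0 < c z) {ρ : Z → Matrix n n ℂ}
    (hρ : ∀ z, (ρ z).PosDef) {R : Matrix (Z × n) (Z × n) ℂ}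
    (hR : R = blockDiagAlgHom ℝ (fun z => c z • ρ z)) (hRH : R.IsHermitian) :
    hermLog hRH = blockDiagAlgHom ℝ
      (fun z => algebraMap ℝ _ (Real.log (c z)) + hermLog (hρ z).isHermitian) := by
  have hspec : ∀ z, ∀ t ∈ spectrum ℝ (ρ z), t ≠ 0 := fun z t ht => by
    obtain ⟨i, rfl⟩ := (hρ z).isHermitian.spectrum_real_eq_range_eigenvalues ▸ ht
    exact ((hρ z).eigenvalues_pos i).ne'
  simp only [hermLog_eq_cfc]
  subst hR
  rw [AlgHom.map_cfc_pi_of_finite_spectrum _ _ _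
    (fun z => (IsSelfAdjoint.all (c z)).smul (hρ z).isHermitian.isSelfAdjoint) hRH
    fun _ => finite_real_spectrum]
  congr 1
  funext z
  exact cfc_log_smul (hc z).ne' _ (hρ z).isHermitian.isSelfAdjoint (hspec z)

theorem stmt17_general (Z : Type) [Fintype Z] [DecidableEq Z]
    (d : ℕ)
    (P P' : Z → ℝ) (hP : ∀ z, 0 < P z) (hP' : ∀ z, 0 < P' z)
    (ρ ρ' : Z → Matrix (Fin d) (Fin d) ℂ)
    (hρ : ∀ z, (ρ z).PosDef) (hρ' : ∀ z, (ρ' z).PosDef)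
    (hρ'1 : ∀ z, (ρ' z).trace = 1)
    (R R' : Matrix (Z × Fin d) (Z × Fin d) ℂ)
    (hR : R = ∑ z, (P z : ℂ) • (Matrix.single z z (1 : ℂ) ⊗ₖ ρ z))
    (hR' : R' = ∑ z, (P' z : ℂ) • (Matrix.single z z (1 : ℂ) ⊗ₖ ρ' z))
    (hRH : R.IsHermitian) (hR'H : R'.IsHermitian) :
    (Matrix.trace (R' * (hermLog hR'H - hermLog hRH))).re =
      (∑ z, P' z * Real.log (P' z / P z)) +
        ∑ z, P' z *
          (Matrix.trace (ρ' z * (hermLog (hρ' z).isHermitian -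
            hermLog (hρ z).isHermitian))).re := by
  have hblock : ∀ (c : Z → ℝ) (σ : Z → Matrix (Fin d) (Fin d) ℂ),
      ∑ z, (c z : ℂ) • (single z z (1 : ℂ) ⊗ₖ σ z) = blockDiagAlgHom ℝ (fun z => c z • σ z) :=
    fun c σ => by
      simp only [← kronecker_smul, Complex.coe_smul]
      exact sum_single_kronecker_eq_blockDiagAlgHom _
  rw [hermLog_blockDiagAlgHom_smul hP hρ (hR.trans (hblock P ρ)),
    hermLog_blockDiagAlgHom_smul hP' hρ' (hR'.trans (hblock P' ρ')), hR', hblock,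
    ← map_sub, ← map_mul, trace_blockDiagAlgHom, Complex.re_sum, ← Finset.sum_add_distrib]
  refine Finset.sum_congr rfl fun z _ => ?_
  have hdiff : algebraMap ℝ _ (Real.log (P' z)) + hermLog (hρ' z).isHermitian -
      (algebraMap ℝ _ (Real.log (P z)) + hermLog (hρ z).isHermitian) =
      Real.log (P' z / P z) • 1 + (hermLog (hρ' z).isHermitian - hermLog (hρ z).isHermitian) := by
    rw [Real.log_div (hP' z).ne' (hP z).ne', sub_smul, ← Algebra.algebraMap_eq_smul_one,
      ← Algebra.algebraMap_eq_smul_one]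
    abel
  rw [Pi.mul_apply, Pi.sub_apply, hdiff, smul_mul_assoc, trace_smul, mul_add, trace_add,
    mul_smul_comm, mul_one, trace_smul, hρ'1]
  simp

/-- Chain rule for the relative entropy of classical-quantum states:
`S(ρ' ‖ ρ) = D(P' ‖ P) + E_{z ∼ P'} S(ρ'_z ‖ ρ_z)` for the block-diagonal states
`ρ = Σ_z P(z) E_{zz} ⊗ ρ_z` and `ρ' = Σ_z P'(z) E_{zz} ⊗ ρ'_z`. -/
theorem stmt17 (Z : Type) [Fintype Z] [DecidableEq Z] [Nonempty Z]
    (d : ℕ) (hd : 1 ≤ d)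
    (P P' : Z → ℝ) (hP : ∀ z, 0 < P z) (hP' : ∀ z, 0 < P' z)
    (hPsum : ∑ z, P z = 1) (hP'sum : ∑ z, P' z = 1)
    (ρ ρ' : Z → Matrix (Fin d) (Fin d) ℂ)
    (hρ : ∀ z, (ρ z).PosDef) (hρ' : ∀ z, (ρ' z).PosDef)
    (hρ1 : ∀ z, (ρ z).trace = 1) (hρ'1 : ∀ z, (ρ' z).trace = 1)
    (R R' : Matrix (Z × Fin d) (Z × Fin d) ℂ)
    (hR : R = ∑ z, (P z : ℂ) • (Matrix.single z z (1 : ℂ) ⊗ₖ ρ z))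
    (hR' : R' = ∑ z, (P' z : ℂ) • (Matrix.single z z (1 : ℂ) ⊗ₖ ρ' z))
    (hRH : R.IsHermitian) (hR'H : R'.IsHermitian) :
    (Matrix.trace (R' * (hermLog hR'H - hermLog hRH))).re =
      (∑ z, P' z * Real.log (P' z / P z)) +
        ∑ z, P' z *
          (Matrix.trace (ρ' z * (hermLog (hρ' z).isHermitian -
            hermLog (hρ z).isHermitian))).re :=
  stmt17_general Z d P P' hP hP' ρ ρ' hρ hρ' hρ'1 R R' hR hR' hRH hR'H
end

section
/- Let d_A, d_B ≥ 1, let ρ be a positive definite density matrix on ℂ^{d_A} ⊗ ℂ^{d_B} (a positive definite (d_A·d_B)×(d_A·d_B) matrix of trace 1, with rows and columns indexed by pairs (i,j)), and let σ and τ be positive definite density matrices of sizes d_A and d_B respectively. Define the partial traces ρ_A (a d_A×d_A matrix with entries (ρ_A)_{i,i'} = Σ_{j=1}^{d_B} ρ_{(i,j),(i',j)}) and ρ_B (a d_B×d_B matrix with entries (ρ_B)_{j,j'} = Σ_{i=1}^{d_A} ρ_{(i,j),(i,j')}). Then S(ρ ‖ σ ⊗ τ) ≥ S(ρ ‖ ρ_A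 ⊗ ρ_B), where ⊗ is the Kronecker product and S(X ‖ Y) = Re Tr(X(log X − log Y)) is the quantum relative entropy with matrix logarithms defined by applying the natural logarithm to the eigenvalues in a spectral decomposition (with the convention log 0 = 0 on the kernel). The right-hand side equals the quantum mutual information I(A : B)_ρ. -/
open scoped ComplexOrder

open Matrix Kronecker

section Spectral

variable {n : Type*} [Fintype n] [DecidableEq n]

lemma aeval_unitary_conj_diagonal (q : Polynomial ℝ) {W : Matrix n n ℂ}
    (hW : W ∈ unitary (Matrix n n ℂ)) (c : n → ℝ) :
    Polynomial.aeval (W * diagonal (fun i => (c i : ℂ)) * star W) q =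
      W * diagonal (fun i => ((q.eval (c i) : ℝ) : ℂ)) * star W := by
  have hdiag : Polynomial.aeval (diagonal fun i => (c i : ℂ)) q =
      diagonal fun i => ((q.eval (c i) : ℝ) : ℂ) := by
    rw [← diagonalAlgHom_apply (R := ℝ), Polynomial.aeval_algHom_apply, diagonalAlgHom_apply,
      Polynomial.aeval_pi_apply]
    congr 1
    funext i
    exact Polynomial.aeval_algebraMap_apply_eq_algebraMap_eval (c i) q
  rw [← Unitary.conjStarAlgAut_apply (S := ℝ) ⟨W, hW⟩, ← StarAlgEquiv.coe_toAlgEquiv,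
    Polynomial.aeval_algEquiv, AlgHom.comp_apply, hdiag]
  rfl

lemma hermLog_unitary_conj_diagonal {W : Matrix n n ℂ} (hW : W ∈ unitary (Matrix n n ℂ))
    (c : n → ℝ) {A : Matrix n n ℂ} (hA : A.IsHermitian)
    (hAW : A = W * diagonal (fun i => (c i : ℂ)) * star W) :
    hermLog hA = W * diagonal (fun i => (Real.log (c i) : ℂ)) * star W := by
  -- both sides are `q(A)` for a polynomial `q` interpolating `log` on the eigenvalues and on `c`
  let nodes : Finset ℝ := Finset.univ.image hA.eigenvalues ∪ Finset.univ.image c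
  let q := Lagrange.interpolate nodes id Real.log
  have hq : ∀ x ∈ nodes, q.eval x = Real.log x := fun x hx =>
    Lagrange.eval_interpolate_at_node Real.log (Set.injOn_id _) hx
  have hq_eig : ∀ i, q.eval (hA.eigenvalues i) = Real.log (hA.eigenvalues i) := fun i =>
    hq _ (Finset.mem_union_left _ (Finset.mem_image_of_mem _ (Finset.mem_univ i)))
  have hq_c : ∀ i, q.eval (c i) = Real.log (c i) := fun i =>
    hq _ (Finset.mem_union_right _ (Finset.mem_image_of_mem _ (Finset.mem_univ i)))
  have hU := SetLike.coe_mem hA.eigenvectorUnitary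
  calc hermLog hA
      = Polynomial.aeval ((hA.eigenvectorUnitary : Matrix n n ℂ) *
          diagonal (fun i => (hA.eigenvalues i : ℂ)) *
          star (hA.eigenvectorUnitary : Matrix n n ℂ)) q := by
        simp only [aeval_unitary_conj_diagonal q hU, hq_eig]; rfl
    _ = Polynomial.aeval (W * diagonal (fun i => (c i : ℂ)) * star W) q := by
        rw [← hAW]; congr 2; exact hA.spectral_theorem.symm
    _ = W * diagonal (fun i => (Real.log (c i) : ℂ)) * star W := by
        simp only [aeval_unitary_conj_diagonal q hW, hq_c]

end Spectral

lemma kronecker_conj_kronecker {m n R : Type*} [Fintype m] [Fintype n] [CommSemiring R]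
    [StarRing R] (U X : Matrix m m R) (V Y : Matrix n n R) :
    (U ⊗ₖ V) * (X ⊗ₖ Y) * star (U ⊗ₖ V) = (U * X * star U) ⊗ₖ (V * Y * star V) := by
  rw [star_eq_conjTranspose, conjTranspose_kronecker, mul_kronecker_mul, mul_kronecker_mul]
  rfl

lemma hermLog_kronecker {m n : Type*} [Fintype m] [DecidableEq m] [Fintype n] [DecidableEq n]
    {σ : Matrix m m ℂ} {τ : Matrix n n ℂ} (hσ : σ.PosDef) (hτ : τ.PosDef)
    (h : (σ ⊗ₖ τ).IsHermitian) :
    hermLog h = hermLog hσ.1 ⊗ₖ 1 + 1 ⊗ₖ hermLog hτ.1 := by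
  set U : Matrix m m ℂ := ↑hσ.1.eigenvectorUnitary
  set V : Matrix n n ℂ := ↑hτ.1.eigenvectorUnitary
  have hU : U ∈ unitary (Matrix m m ℂ) := SetLike.coe_mem _
  have hV : V ∈ unitary (Matrix n n ℂ) := SetLike.coe_mem _
  have hspec : σ ⊗ₖ τ = (U ⊗ₖ V) *
      diagonal (fun p : m × n => ((hσ.1.eigenvalues p.1 * hτ.1.eigenvalues p.2 : ℝ) : ℂ)) *
      star (U ⊗ₖ V) := by
    have hdiag : diagonal (fun p : m × n =>
          ((hσ.1.eigenvalues p.1 * hτ.1.eigenvalues p.2 : ℝ) : ℂ)) =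
        diagonal (fun i => (hσ.1.eigenvalues i : ℂ)) ⊗ₖ
          diagonal (fun j => (hτ.1.eigenvalues j : ℂ)) := by
      rw [diagonal_kronecker_diagonal]
      push_cast
      rfl
    rw [hdiag, kronecker_conj_kronecker]
    congr 1
    · exact hσ.1.spectral_theorem
    · exact hτ.1.spectral_theorem
  have hlog : (diagonal fun p : m × n =>
        ((Real.log (hσ.1.eigenvalues p.1 * hτ.1.eigenvalues p.2) : ℝ) : ℂ)) =
      diagonal (fun i => (Real.log (hσ.1.eigenvalues i) : ℂ)) ⊗ₖ 1 +
        1 ⊗ₖ diagonal (fun j => (Real.log (hτ.1.eigenvalues j) : ℂ)) := by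
    rw [← diagonal_one, diagonal_kronecker_diagonal, ← diagonal_one, diagonal_kronecker_diagonal,
      diagonal_add]
    congr 1
    funext p
    rw [Real.log_mul (hσ.eigenvalues_pos p.1).ne' (hτ.eigenvalues_pos p.2).ne']
    push_cast
    ring
  rw [hermLog_unitary_conj_diagonal (kronecker_mem_unitary hU hV) _ h hspec, hlog, mul_add,
    add_mul, kronecker_conj_kronecker, kronecker_conj_kronecker]
  simp only [mul_one, Unitary.mul_star_self_of_mem hU, Unitary.mul_star_self_of_mem hV]
  rfl

lemma sub_le_mul_log_sub_mul_log {p q : ℝ} (hp : 0 ≤ p) (hq : 0 < q) :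
    p - q ≤ p * Real.log p - p * Real.log q := by
  rcases hp.eq_or_lt with rfl | hp
  · simp [hq.le]
  have hlog := Real.log_le_sub_one_of_pos (div_pos hq hp)
  rw [Real.log_div hq.ne' hp.ne'] at hlog
  have := mul_le_mul_of_nonneg_left hlog hp.le
  rw [mul_sub, mul_sub, mul_div_cancel₀ _ hp.ne'] at this
  linarith

section Klein

variable {n : Type*} [Fintype n] [DecidableEq n]

lemma sum_sub_sum_le_of_mem_doublyStochastic (p q : n → ℝ) (hp : ∀ i, 0 ≤ p i)
    (hq : ∀ j, 0 < q j) {C : Matrix n n ℝ} (hC : C ∈ doublyStochastic ℝ n) :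
    ∑ i, p i - ∑ j, q j ≤
      ∑ i, p i * Real.log (p i) - ∑ i, ∑ j, C i j * (p i * Real.log (q j)) :=
  calc ∑ i, p i - ∑ j, q j = ∑ i, ∑ j, C i j * (p i - q j) := by
        simp only [mul_sub, Finset.sum_sub_distrib, ← Finset.sum_mul,
          sum_row_of_mem_doublyStochastic hC, one_mul]
        rw [Finset.sum_comm]
        simp only [← Finset.sum_mul, sum_col_of_mem_doublyStochastic hC, one_mul]
    _ ≤ _ := Finset.sum_le_sum fun i _ => Finset.sum_le_sum fun j _ =>
        mul_le_mul_of_nonneg_left (sub_le_mul_log_sub_mul_log (hp i) (hq j))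
          (nonneg_of_mem_doublyStochastic hC)
    _ = _ := by
        simp only [mul_sub, Finset.sum_sub_distrib, ← Finset.sum_mul,
          sum_row_of_mem_doublyStochastic hC, one_mul]

lemma map_normSq_mem_doublyStochastic {W : Matrix n n ℂ} (hW : W ∈ unitary (Matrix n n ℂ)) :
    W.map Complex.normSq ∈ doublyStochastic ℝ n := by
  have hrow : ∀ {W : Matrix n n ℂ}, W ∈ unitary (Matrix n n ℂ) →
      ∀ i, ∑ j, Complex.normSq (W i j) = 1 := by
    intro W hW i
    have h := congrArg (fun M : Matrix n n ℂ => M i i) (Unitary.mul_star_self_of_mem hW)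
    simp only [mul_apply, star_apply, one_apply_eq, Complex.star_def, Complex.mul_conj] at h
    exact_mod_cast h
  refine mem_doublyStochastic_iff_sum.2 ⟨fun i j => Complex.normSq_nonneg _, hrow hW, fun j => ?_⟩
  simpa [star_apply, Complex.star_def, Complex.normSq_conj] using
    hrow (Unitary.star_mem hW) j

lemma trace_unitary_conj_diagonal_mul {U : Matrix n n ℂ} (hU : U ∈ unitary (Matrix n n ℂ))
    (V : Matrix n n ℂ) (a b : n → ℂ) :
    trace (U * diagonal a * star U * (V * diagonal b * star V)) =
      ∑ i, ∑ j, (Complex.normSq ((star U * V) i j) : ℂ) * (a i * b j) := by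
  set W := star U * V
  have hprod : U * diagonal a * star U * (V * diagonal b * star V) =
      U * (diagonal a * (W * diagonal b * star W)) * star U := by
    simp only [W, star_mul, star_star, mul_assoc, Unitary.mul_star_self_of_mem hU, mul_one]
  rw [hprod, trace_mul_cycle, Unitary.star_mul_self_of_mem hU, one_mul]
  refine Finset.sum_congr rfl fun i _ => ?_
  rw [diag_apply, diagonal_mul, mul_apply, Finset.mul_sum]
  refine Finset.sum_congr rfl fun j _ => ?_
  rw [mul_diagonal, star_apply, Complex.normSq_eq_conj_mul_self, Complex.star_def]
  ring

theorem klein_inequality {P Q : Matrix n n ℂ} (hP : P.PosSemidef) (hQ : Q.PosDef) :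
    (P.trace - Q.trace).re ≤ (trace (P * (hermLog hP.1 - hermLog hQ.1))).re := by
  set U : Matrix n n ℂ := ↑hP.1.eigenvectorUnitary
  set V : Matrix n n ℂ := ↑hQ.1.eigenvectorUnitary
  have hU : U ∈ unitary (Matrix n n ℂ) := SetLike.coe_mem _
  have hV : V ∈ unitary (Matrix n n ℂ) := SetLike.coe_mem _
  set p := hP.1.eigenvalues
  set q := hQ.1.eigenvalues
  have hPU : P = U * diagonal (fun i => (p i : ℂ)) * star U := hP.1.spectral_theorem
  have hPlogP : (trace (P * hermLog hP.1)).re = ∑ i, p i * Real.log (p i) := by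
    change (trace (P * (U * diagonal (fun i => (Real.log (p i) : ℂ)) * star U))).re = _
    rw [hPU, trace_unitary_conj_diagonal_mul hU, Unitary.star_mul_self_of_mem hU]
    simp [one_apply, apply_ite, Complex.re_sum]
  have hPlogQ : (trace (P * hermLog hQ.1)).re =
      ∑ i, ∑ j, (star U * V).map Complex.normSq i j * (p i * Real.log (q j)) := by
    change (trace (P * (V * diagonal (fun j => (Real.log (q j) : ℂ)) * star V))).re = _
    rw [hPU, trace_unitary_conj_diagonal_mul hU]
    simp [Complex.re_sum]
  rw [mul_sub, trace_sub, Complex.sub_re, Complex.sub_re, hPlogP, hPlogQ,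
    hP.1.trace_eq_sum_eigenvalues, hQ.1.trace_eq_sum_eigenvalues]
  simpa [Complex.re_sum] using sum_sub_sum_le_of_mem_doublyStochastic p q hP.eigenvalues_nonneg
    hQ.eigenvalues_pos (map_normSq_mem_doublyStochastic (mul_mem (Unitary.star_mem hU) hV))

end Klein

section PartialTrace

variable {a b R : Type*}

def partialTraceRight [Fintype b] [AddCommMonoid R] (ρ : Matrix (a × b) (a × b) R) :
    Matrix a a R :=
  of fun i i' => ∑ j, ρ (i, j) (i', j)

def partialTraceLeft [Fintype a] [AddCommMonoid R] (ρ : Matrix (a × b) (a × b) R) :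
    Matrix b b R :=
  of fun j j' => ∑ i, ρ (i, j) (i, j')

section Trace

variable [Fintype a] [Fintype b]

lemma trace_partialTraceRight [AddCommMonoid R] (ρ : Matrix (a × b) (a × b) R) :
    (partialTraceRight ρ).trace = ρ.trace := by
  simp [partialTraceRight, trace, Fintype.sum_prod_type]

lemma trace_partialTraceLeft [AddCommMonoid R] (ρ : Matrix (a × b) (a × b) R) :
    (partialTraceLeft ρ).trace = ρ.trace := by
  simp only [partialTraceLeft, trace, diag_apply, of_apply, Fintype.sum_prod_type]
  exact Finset.sum_comm

lemma trace_mul_kronecker_one [Semiring R] [DecidableEq b] (ρ : Matrix (a × b) (a × b) R)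
    (X : Matrix a a R) :
    trace (ρ * (X ⊗ₖ (1 : Matrix b b R))) = trace (partialTraceRight ρ * X) := by
  simp only [trace, diag_apply, mul_apply, kroneckerMap_apply, one_apply, partialTraceRight,
    of_apply, Fintype.sum_prod_type, mul_ite, mul_one, mul_zero, Finset.sum_ite_eq',
    Finset.mem_univ, if_true, Finset.sum_mul]
  exact Finset.sum_congr rfl fun _ _ => Finset.sum_comm

lemma trace_mul_one_kronecker [Semiring R] [DecidableEq a] (ρ : Matrix (a × b) (a × b) R)
    (Y : Matrix b b R) :
    trace (ρ * ((1 : Matrix a a R) ⊗ₖ Y)) = trace (partialTraceLeft ρ * Y) := by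
  simp only [trace, diag_apply, mul_apply, kroneckerMap_apply, one_apply, partialTraceLeft,
    of_apply, Fintype.sum_prod_type, ite_mul, one_mul, zero_mul, mul_ite, mul_zero,
    Finset.sum_ite_irrel, Finset.sum_const_zero, Finset.sum_ite_eq', Finset.mem_univ, if_true,
    Finset.sum_mul]
  rw [Finset.sum_comm]
  exact Finset.sum_congr rfl fun _ _ => Finset.sum_comm

end Trace

variable [Ring R] [PartialOrder R] [StarRing R] [AddLeftMono R]

lemma posDef_partialTraceRight [Fintype b] [Nonempty b] {ρ : Matrix (a × b) (a × b) R}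
    (hρ : ρ.PosDef) : (partialTraceRight ρ).PosDef := by
  have hsum : partialTraceRight ρ = ∑ j, ρ.submatrix (fun i => (i, j)) (fun i => (i, j)) := by
    ext i i'
    simp [partialTraceRight, Matrix.sum_apply]
  rw [hsum]
  exact posDef_sum Finset.univ_nonempty fun j _ =>
    hρ.submatrix fun _ _ h => (Prod.mk.inj h).1

lemma posDef_partialTraceLeft [Fintype a] [Nonempty a] {ρ : Matrix (a × b) (a × b) R}
    (hρ : ρ.PosDef) : (partialTraceLeft ρ).PosDef := by
  have hsum : partialTraceLeft ρ = ∑ i, ρ.submatrix (fun j => (i, j)) (fun j => (i, j)) := by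
    ext j j'
    simp [partialTraceLeft, Matrix.sum_apply]
  rw [hsum]
  exact posDef_sum Finset.univ_nonempty fun i _ =>
    hρ.submatrix fun _ _ h => (Prod.mk.inj h).2

end PartialTrace

lemma trace_mul_hermLog_kronecker {a b : Type*} [Fintype a] [DecidableEq a] [Fintype b]
    [DecidableEq b] (ρ : Matrix (a × b) (a × b) ℂ) {σ : Matrix a a ℂ} {τ : Matrix b b ℂ}
    (hσ : σ.PosDef) (hτ : τ.PosDef) (h : (σ ⊗ₖ τ).IsHermitian) :
    trace (ρ * hermLog h) =
      trace (partialTraceRight ρ * hermLog hσ.1) + trace (partialTraceLeft ρ * hermLog hτ.1) := by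
  rw [hermLog_kronecker hσ hτ h, mul_add, trace_add, trace_mul_kronecker_one,
    trace_mul_one_kronecker]

/-- For a bipartite state `ρ` with marginals `ρ_A, ρ_B`, and product states `σ ⊗ τ`:
`S(ρ ‖ σ ⊗ τ) ≥ S(ρ ‖ ρ_A ⊗ ρ_B) = I(A : B)_ρ`. -/
theorem stmt19 (dA dB : ℕ) (hdA : 1 ≤ dA) (hdB : 1 ≤ dB)
    (ρ : Matrix (Fin dA × Fin dB) (Fin dA × Fin dB) ℂ)
    (hρ : ρ.PosDef) (hρ1 : ρ.trace = 1)
    (σ : Matrix (Fin dA) (Fin dA) ℂ) (hσ : σ.PosDef) (hσ1 : σ.trace = 1)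
    (τ : Matrix (Fin dB) (Fin dB) ℂ) (hτ : τ.PosDef) (hτ1 : τ.trace = 1)
    (ρA : Matrix (Fin dA) (Fin dA) ℂ)
    (hρA : ∀ i i', ρA i i' = ∑ j, ρ (i, j) (i', j))
    (ρB : Matrix (Fin dB) (Fin dB) ℂ)
    (hρB : ∀ j j', ρB j j' = ∑ i, ρ (i, j) (i, j'))
    (h1 : (σ ⊗ₖ τ).IsHermitian) (h2 : (ρA ⊗ₖ ρB).IsHermitian) :
    (Matrix.trace (ρ * (hermLog hρ.isHermitian - hermLog h2))).re ≤
      (Matrix.trace (ρ * (hermLog hρ.isHermitian - hermLog h1))).re := by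
  have : Nonempty (Fin dA) := ⟨⟨0, hdA⟩⟩
  have : Nonempty (Fin dB) := ⟨⟨0, hdB⟩⟩
  obtain rfl : ρA = partialTraceRight ρ := ext hρA
  obtain rfl : ρB = partialTraceLeft ρ := ext hρB
  have hρA' := posDef_partialTraceRight hρ
  have hρB' := posDef_partialTraceLeft hρ
  have kleinA := klein_inequality hρA'.posSemidef hσ
  have kleinB := klein_inequality hρB'.posSemidef hτ
  rw [trace_partialTraceRight, hρ1, hσ1, sub_self, mul_sub, trace_sub] at kleinA
  rw [trace_partialTraceLeft, hρ1, hτ1, sub_self, mul_sub, trace_sub] at kleinB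
  rw [mul_sub, mul_sub, trace_sub, trace_sub, trace_mul_hermLog_kronecker ρ hσ hτ h1,
    trace_mul_hermLog_kronecker ρ hρA' hρB' h2]
  simp only [Complex.sub_re, Complex.add_re, Complex.zero_re] at kleinA kleinB ⊢
  linarith
end
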